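/- arXiv:2006.09484 — 9 statements merged into one kernel-verified Lean document; each statement's English description precedes it below -/
import Mathlib

section
/- For every policy π (assigning to each state s a vector π_s ∈ Δ^A), the robust Bellman policy update L_π is a γ-contraction with respect to the supremum norm, i.e. ‖L_π x − L_π y‖∞ ≤ γ‖x − y‖∞ for all x, y ∈ ℝ^S; consequently the equation L_π v = v has a unique solution v_π ∈ ℝ^S. -/
/-- For every policy π, the robust Bellman policy update `Lpi` is a
γ-contraction in the sup norm, hence `Lpi v = v` has a unique solution. -/
theorem robust_bellman_policy_update_contraction
    {S A : Type*} [Fintype S] [Nonempty S] [Fintype A] [Nonempty A]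
    (γ : ℝ) (hγ0 : 0 < γ) (hγ1 : γ < 1)
    (r : S → A → S → ℝ)
    (P : S → Set (A → S → ℝ))
    (hPne : ∀ s, (P s).Nonempty)
    (hPcompact : ∀ s, IsCompact (P s))
    (hPsub : ∀ s, ∀ p ∈ P s, ∀ a, p a ∈ stdSimplex ℝ S)
    (π : S → A → ℝ) (hπ : ∀ s, π s ∈ stdSimplex ℝ A)
    (Lpi : (S → ℝ) → (S → ℝ))
    (hLpi : ∀ v s, Lpi v s =
      sInf ((fun p : A → S → ℝ =>
        ∑ a, π s a * ∑ s', p a s' * (r s a s' + γ * v s')) '' P s)) :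
    (∀ x y : S → ℝ, ‖Lpi x - Lpi y‖ ≤ γ * ‖x - y‖) ∧
    (∃! v : S → ℝ, Lpi v = v) := by
  set F : (S → ℝ) → S → (A → S → ℝ) → ℝ := fun v s p =>
    ∑ a, π s a * ∑ s', p a s' * (r s a s' + γ * v s') with hF
  have hcont : ∀ v s, Continuous (F v s) := by
    intro v s; apply continuous_finset_sum; intro a _
    exact continuous_const.mul (continuous_finset_sum _ fun s' _ =>
      ((continuous_apply_apply a s').mul continuous_const))
  have hbdd : ∀ v s, BddBelow ((F v s) '' P s) := fun v s =>
    (((hPcompact s).image (hcont v s)).bddBelow)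
  -- key pointwise inequality for fixed p
  have key : ∀ (x y : S → ℝ) (s : S), ∀ p ∈ P s,
      F x s p ≤ F y s p + γ * ‖x - y‖ := by
    intro x y s p hp
    set c := ‖x - y‖ with hc
    have hinner : ∀ a, ∑ s', p a s' * (r s a s' + γ * x s')
        ≤ (∑ s', p a s' * (r s a s' + γ * y s')) + γ * c := by
      intro a
      obtain ⟨hp0, hp1⟩ := hPsub s p hp a
      calc ∑ s', p a s' * (r s a s' + γ * x s')
          ≤ ∑ s', p a s' * (r s a s' + γ * y s' + γ * c) := by
            apply Finset.sum_le_sum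
            intro s' _
            have hx : x s' - y s' ≤ c := by
              have h := norm_le_pi_norm (x - y) s'
              simp [Real.norm_eq_abs] at h
              have := (abs_le.mp h).2
              simpa using this
            have : γ * x s' ≤ γ * (y s' + c) := by nlinarith
            have := hp0 s'
            nlinarith
        _ = (∑ s', p a s' * (r s a s' + γ * y s')) + (∑ s', p a s') * (γ * c) := by
            simp [mul_add, Finset.sum_add_distrib, Finset.sum_mul, add_assoc]
        _ = (∑ s', p a s' * (r s a s' + γ * y s')) + γ * c := by rw [hp1]; ring
    obtain ⟨hπ0, hπ1⟩ := hπ s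
    calc F x s p ≤ ∑ a, π s a * ((∑ s', p a s' * (r s a s' + γ * y s')) + γ * c) := by
          apply Finset.sum_le_sum
          intro a _
          exact mul_le_mul_of_nonneg_left (hinner a) (hπ0 a)
      _ = (∑ a, π s a * ∑ s', p a s' * (r s a s' + γ * y s')) + (∑ a, π s a) * (γ * c) := by
          simp [mul_add, Finset.sum_add_distrib, Finset.sum_mul]
      _ = F y s p + γ * c := by rw [hπ1]; simp [hF]
  -- one-sided inf inequality
  have half : ∀ (x y : S → ℝ) (s : S), Lpi x s ≤ Lpi y s + γ * ‖x - y‖ := by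
    intro x y s
    rw [hLpi x s, hLpi y s]
    have : sInf (F x s '' P s) - γ * ‖x - y‖ ≤ sInf (F y s '' P s) := by
      apply le_csInf ((hPne s).image _)
      rintro b ⟨p, hp, rfl⟩
      have h1 : sInf (F x s '' P s) ≤ F x s p := csInf_le (hbdd x s) ⟨p, hp, rfl⟩
      have h2 := key x y s p hp
      linarith
    linarith
  have contraction : ∀ x y : S → ℝ, ‖Lpi x - Lpi y‖ ≤ γ * ‖x - y‖ := by
    intro x y
    have hnn : 0 ≤ γ * ‖x - y‖ := mul_nonneg hγ0.le (norm_nonneg _)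
    rw [pi_norm_le_iff_of_nonneg hnn]
    intro s
    rw [Real.norm_eq_abs, abs_le]
    have h1 := half x y s
    have h2 := half y x s
    rw [show ‖y - x‖ = ‖x - y‖ from norm_sub_rev y x] at h2
    constructor <;> simp [Pi.sub_apply] <;> linarith
  refine ⟨contraction, ?_⟩
  have hlip : LipschitzWith ⟨γ, hγ0.le⟩ Lpi := by
    apply LipschitzWith.of_dist_le_mul
    intro x y
    rw [dist_eq_norm, dist_eq_norm]
    exact contraction x y
  have hcw : ContractingWith ⟨γ, hγ0.le⟩ Lpi := ⟨by exact_mod_cast hγ1, hlip⟩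
  refine ⟨hcw.fixedPoint Lpi, hcw.fixedPoint_isFixedPt, ?_⟩
  intro v hv
  exact hcw.fixedPoint_unique hv
end

section
/- The robust Bellman optimality operator L is a γ-contraction with respect to the supremum norm, i.e. ‖L x − L y‖∞ ≤ γ‖x − y‖∞ for all x, y ∈ ℝ^S; consequently the equation L v = v has a unique solution v* ∈ ℝ^S. -/
/-!
For a fixed decision rule `d` and adversarial kernel `p`, the return
`∑ a, d a * ∑ s', p a s' * (r s a s' + γ * v s')` depends on `v` only through a probability
average of `γ • v`, so it moves by at most `γ * ‖x - y‖` when `v` changes from `x` to `y`.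
Infima and suprema of two families that stay within `c` of each other are within `c` of each
other (the same averaging bounds the returns by `‖r + γ v‖`, so these are genuine infima and
suprema), so the max-min defining `L` inherits the bound, and Banach's fixed-point theorem gives the
unique fixed point.
-/

open Finset

section SupInfPerturbation

variable {α : Type*} {f g : α → ℝ} {s : Set α} {c : ℝ}

theorem isBounded_image_of_forall_abs_le (h : ∀ x ∈ s, |f x| ≤ c) :
    Bornology.IsBounded (f '' s) :=
  (Metric.isBounded_Icc (-c) c).subset <| by
    rintro _ ⟨x, hx, rfl⟩
    exact abs_le.1 (h x hx)

theorem abs_csInf_image_le (hs : s.Nonempty) (h : ∀ x ∈ s, |f x| ≤ c) :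
    |sInf (f '' s)| ≤ c := by
  obtain ⟨x₀, hx₀⟩ := hs
  refine abs_le.2 ⟨le_csInf ⟨f x₀, x₀, hx₀, rfl⟩ ?_, ?_⟩
  · rintro _ ⟨x, hx, rfl⟩
    exact (abs_le.1 (h x hx)).1
  · exact csInf_le_of_le (isBounded_image_of_forall_abs_le h).bddBelow
      (Set.mem_image_of_mem f hx₀) (abs_le.1 (h x₀ hx₀)).2

theorem csInf_image_sub_csInf_image_le (hs : s.Nonempty) (hf : BddBelow (f '' s))
    (h : ∀ x ∈ s, f x - g x ≤ c) : sInf (f '' s) - sInf (g '' s) ≤ c := by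
  rw [sub_le_comm]
  refine le_csInf (hs.image g) ?_
  rintro _ ⟨x, hx, rfl⟩
  linarith [csInf_le hf (Set.mem_image_of_mem f hx), h x hx]

theorem csSup_image_sub_csSup_image_le (hs : s.Nonempty) (hg : BddAbove (g '' s))
    (h : ∀ x ∈ s, f x - g x ≤ c) : sSup (f '' s) - sSup (g '' s) ≤ c := by
  rw [sub_le_iff_le_add]
  refine csSup_le (hs.image f) ?_
  rintro _ ⟨x, hx, rfl⟩
  linarith [le_csSup hg (Set.mem_image_of_mem g hx), h x hx]

theorem abs_csInf_image_sub_csInf_image_le (hs : s.Nonempty) (hf : BddBelow (f '' s))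
    (hg : BddBelow (g '' s)) (h : ∀ x ∈ s, |f x - g x| ≤ c) :
    |sInf (f '' s) - sInf (g '' s)| ≤ c :=
  abs_sub_le_iff.2
    ⟨csInf_image_sub_csInf_image_le hs hf fun x hx => (abs_sub_le_iff.1 (h x hx)).1,
      csInf_image_sub_csInf_image_le hs hg fun x hx => (abs_sub_le_iff.1 (h x hx)).2⟩

theorem abs_csSup_image_sub_csSup_image_le (hs : s.Nonempty) (hf : BddAbove (f '' s))
    (hg : BddAbove (g '' s)) (h : ∀ x ∈ s, |f x - g x| ≤ c) :
    |sSup (f '' s) - sSup (g '' s)| ≤ c :=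
  abs_sub_le_iff.2
    ⟨csSup_image_sub_csSup_image_le hs hg fun x hx => (abs_sub_le_iff.1 (h x hx)).1,
      csSup_image_sub_csSup_image_le hs hf fun x hx => (abs_sub_le_iff.1 (h x hx)).2⟩

end SupInfPerturbation

section StdSimplex

variable {ι κ : Type*} [Fintype ι] [Fintype κ]

theorem abs_sum_mul_le_norm_of_mem_stdSimplex {d w : ι → ℝ} (hd : d ∈ stdSimplex ℝ ι) :
    |∑ i, d i * w i| ≤ ‖w‖ :=
  calc |∑ i, d i * w i| ≤ ∑ i, |d i * w i| := abs_sum_le_sum_abs _ _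
    _ = ∑ i, d i * ‖w i‖ := by simp_rw [abs_mul, abs_of_nonneg (hd.1 _), Real.norm_eq_abs]
    _ ≤ ∑ i, d i * ‖w‖ :=
      sum_le_sum fun i _ => mul_le_mul_of_nonneg_left (norm_le_pi_norm w i) (hd.1 i)
    _ = ‖w‖ := by rw [← sum_mul, hd.2, one_mul]

theorem abs_sum_mul_sum_mul_le_norm_of_mem_stdSimplex {d : ι → ℝ} {p w : ι → κ → ℝ}
    (hd : d ∈ stdSimplex ℝ ι) (hp : ∀ i, p i ∈ stdSimplex ℝ κ) :
    |∑ i, d i * ∑ j, p i j * w i j| ≤ ‖w‖ := by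
  refine (abs_sum_mul_le_norm_of_mem_stdSimplex hd).trans ?_
  refine (pi_norm_le_iff_of_nonneg (norm_nonneg w)).2 fun i => ?_
  rw [Real.norm_eq_abs]
  exact (abs_sum_mul_le_norm_of_mem_stdSimplex (hp i)).trans (norm_le_pi_norm w i)

end StdSimplex

section RobustBellman

variable {S A : Type*} [Fintype S] [Fintype A]
  (r : S → A → S → ℝ) (γ : ℝ) (P : S → Set (A → S → ℝ))

def robustReturn (v : S → ℝ) (s : S) (d : A → ℝ) (p : A → S → ℝ) : ℝ :=
  ∑ a, d a * ∑ s', p a s' * (r s a s' + γ * v s')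

noncomputable def worstCaseReturn (v : S → ℝ) (s : S) (d : A → ℝ) : ℝ :=
  sInf (robustReturn r γ v s d '' P s)

noncomputable def robustBellman (v : S → ℝ) (s : S) : ℝ :=
  sSup (worstCaseReturn r γ P v s '' stdSimplex ℝ A)

variable {r γ P}

theorem abs_robustReturn_le (v : S → ℝ) (s : S) {d : A → ℝ} {p : A → S → ℝ}
    (hd : d ∈ stdSimplex ℝ A) (hp : ∀ a, p a ∈ stdSimplex ℝ S) :
    |robustReturn r γ v s d p| ≤ ‖fun a s' => r s a s' + γ * v s'‖ :=
  abs_sum_mul_sum_mul_le_norm_of_mem_stdSimplex hd hp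

theorem abs_robustReturn_sub_le (hγ : 0 ≤ γ) (x y : S → ℝ) (s : S) {d : A → ℝ}
    {p : A → S → ℝ} (hd : d ∈ stdSimplex ℝ A) (hp : ∀ a, p a ∈ stdSimplex ℝ S) :
    |robustReturn r γ x s d p - robustReturn r γ y s d p| ≤ γ * ‖x - y‖ := by
  have hsub : robustReturn r γ x s d p - robustReturn r γ y s d p =
      ∑ a, d a * ∑ s', p a s' * (fun _ : A => γ • (x - y)) a s' := by
    simp only [robustReturn, ← sum_sub_distrib, ← mul_sub, Pi.smul_apply, Pi.sub_apply,
      smul_eq_mul]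
    congr! 4
    ring
  calc _ ≤ ‖fun _ : A => γ • (x - y)‖ :=
        hsub ▸ abs_sum_mul_sum_mul_le_norm_of_mem_stdSimplex hd hp
    _ ≤ ‖γ • (x - y)‖ := pi_norm_const_le _
    _ = γ * ‖x - y‖ := by rw [norm_smul, Real.norm_of_nonneg hγ]

variable (hP : ∀ s, (P s).Nonempty) (hPsub : ∀ s, ∀ p ∈ P s, ∀ a, p a ∈ stdSimplex ℝ S)
include hP hPsub

theorem abs_worstCaseReturn_le (v : S → ℝ) (s : S) {d : A → ℝ} (hd : d ∈ stdSimplex ℝ A) :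
    |worstCaseReturn r γ P v s d| ≤ ‖fun a s' => r s a s' + γ * v s'‖ :=
  abs_csInf_image_le (hP s) fun p hp => abs_robustReturn_le v s hd (hPsub s p hp)

theorem abs_worstCaseReturn_sub_le (hγ : 0 ≤ γ) (x y : S → ℝ) (s : S) {d : A → ℝ}
    (hd : d ∈ stdSimplex ℝ A) :
    |worstCaseReturn r γ P x s d - worstCaseReturn r γ P y s d| ≤ γ * ‖x - y‖ := by
  have hbdd (v : S → ℝ) : BddBelow (robustReturn r γ v s d '' P s) :=
    (isBounded_image_of_forall_abs_le fun p hp =>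
      abs_robustReturn_le v s hd (hPsub s p hp)).bddBelow
  exact abs_csInf_image_sub_csInf_image_le (hP s) (hbdd x) (hbdd y) fun p hp =>
    abs_robustReturn_sub_le hγ x y s hd (hPsub s p hp)

theorem norm_robustBellman_sub_le [Nonempty A] (hγ : 0 ≤ γ) (x y : S → ℝ) :
    ‖robustBellman r γ P x - robustBellman r γ P y‖ ≤ γ * ‖x - y‖ := by
  classical
  refine (pi_norm_le_iff_of_nonneg (by positivity)).2 fun s => ?_
  rw [Pi.sub_apply, Real.norm_eq_abs]
  have hbdd (v : S → ℝ) : BddAbove (worstCaseReturn r γ P v s '' stdSimplex ℝ A) :=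
    (isBounded_image_of_forall_abs_le fun d hd =>
      abs_worstCaseReturn_le hP hPsub v s hd).bddAbove
  obtain ⟨a⟩ := ‹Nonempty A›
  exact abs_csSup_image_sub_csSup_image_le ⟨_, single_mem_stdSimplex ℝ a⟩ (hbdd x) (hbdd y)
    fun d hd => abs_worstCaseReturn_sub_le hP hPsub hγ x y s hd

theorem contractingWith_robustBellman [Nonempty A] (hγ0 : 0 ≤ γ) (hγ1 : γ < 1) :
    ContractingWith ⟨γ, hγ0⟩ (robustBellman r γ P) :=
  ⟨hγ1, LipschitzWith.of_dist_le_mul fun x y => by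
    rw [dist_eq_norm, dist_eq_norm]
    exact norm_robustBellman_sub_le hP hPsub hγ0 x y⟩

end RobustBellman

theorem robust_bellman_optimality_operator_contraction_general
    {S A : Type*} [Fintype S] [Fintype A] [Nonempty A]
    (γ : ℝ) (hγ0 : 0 < γ) (hγ1 : γ < 1)
    (r : S → A → S → ℝ)
    (P : S → Set (A → S → ℝ))
    (hPne : ∀ s, (P s).Nonempty)
    (hPsub : ∀ s, ∀ p ∈ P s, ∀ a, p a ∈ stdSimplex ℝ S)
    (L : (S → ℝ) → (S → ℝ))
    (hL : ∀ v s, L v s =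
      sSup ((fun d : A → ℝ =>
        sInf ((fun p : A → S → ℝ =>
          ∑ a, d a * ∑ s', p a s' * (r s a s' + γ * v s')) '' P s)) '' stdSimplex ℝ A)) :
    (∀ x y : S → ℝ, ‖L x - L y‖ ≤ γ * ‖x - y‖) ∧
    (∃! v : S → ℝ, L v = v) := by
  obtain rfl : L = robustBellman r γ P := funext₂ hL
  have hcontr : ContractingWith _ (robustBellman r γ P) :=
    contractingWith_robustBellman hPne hPsub hγ0.le hγ1
  exact ⟨norm_robustBellman_sub_le hPne hPsub hγ0.le,
    ⟨_, hcontr.fixedPoint_isFixedPt, fun _ => hcontr.fixedPoint_unique⟩⟩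

/-- The robust Bellman optimality operator `L` is a γ-contraction in
the sup norm, hence `L v = v` has a unique solution. -/
theorem robust_bellman_optimality_operator_contraction
    {S A : Type*} [Fintype S] [Nonempty S] [Fintype A] [Nonempty A]
    (γ : ℝ) (hγ0 : 0 < γ) (hγ1 : γ < 1)
    (r : S → A → S → ℝ)
    (P : S → Set (A → S → ℝ))
    (hPne : ∀ s, (P s).Nonempty)
    (hPcompact : ∀ s, IsCompact (P s))
    (hPsub : ∀ s, ∀ p ∈ P s, ∀ a, p a ∈ stdSimplex ℝ S)
    (L : (S → ℝ) → (S → ℝ))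
    (hL : ∀ v s, L v s =
      sSup ((fun d : A → ℝ =>
        sInf ((fun p : A → S → ℝ =>
          ∑ a, d a * ∑ s', p a s' * (r s a s' + γ * v s')) '' P s)) '' stdSimplex ℝ A)) :
    (∀ x y : S → ℝ, ‖L x - L y‖ ≤ γ * ‖x - y‖) ∧
    (∃! v : S → ℝ, L v = v) :=
  robust_bellman_optimality_operator_contraction_general γ hγ0 hγ1 r P hPne hPsub L hL
end

section
/- For every policy π and all x, y ∈ ℝ^S, there exists a row-stochastic matrix P ∈ ℝ^{S×S} (nonnegative entries, each row summing to 1) such that L_π x − L_π y ≥ γ · P(x − y) componentwise. -/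
/-! For each state `s`, pick an adversarial model `p` attaining the infimum defining
`(L_π x)_s`. The same `p` is feasible, hence suboptimal, for `(L_π y)_s`, so
`(L_π x)_s - (L_π y)_s` is at least the difference of the two objectives at `p`; there the
rewards cancel and what remains is `γ` times the `π_s`-mixture of the rows `p_a` applied
to `x - y`. That mixture is a probability vector, the `s`-th row of the required matrix. -/

theorem IsCompact.exists_sub_le_sInf_image_sub {X : Type*} [TopologicalSpace X] {K : Set X}
    (hK : IsCompact K) (hne : K.Nonempty) {f g : X → ℝ} (hf : Continuous f)
    (hg : Continuous g) : ∃ p ∈ K, f p - g p ≤ sInf (f '' K) - sInf (g '' K) := by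
  obtain ⟨p, hpK, hmin⟩ := hK.exists_isMinOn hne hf.continuousOn
  have hf_inf : sInf (f '' K) = f p :=
    IsLeast.csInf_eq ⟨Set.mem_image_of_mem f hpK, by rintro _ ⟨q, hq, rfl⟩; exact hmin hq⟩
  have hg_inf : sInf (g '' K) ≤ g p :=
    csInf_le (hK.image hg).bddBelow (Set.mem_image_of_mem g hpK)
  exact ⟨p, hpK, by linarith⟩

section PolicyEvaluation

variable {S A : Type*} [Fintype S] [Fintype A]

/-- The objective minimised over the ambiguity set `P_s` in `(L_π v)_s`, as a function of the
model `p`, with `π = π_s` and `r = r_s`. -/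
def policyValue (π : A → ℝ) (r : A → S → ℝ) (γ : ℝ) (v : S → ℝ) (p : A → S → ℝ) : ℝ :=
  ∑ a, π a * ∑ s', p a s' * (r a s' + γ * v s')

theorem continuous_policyValue (π : A → ℝ) (r : A → S → ℝ) (γ : ℝ) (v : S → ℝ) :
    Continuous (policyValue π r γ v) := by
  unfold policyValue
  fun_prop

theorem policyValue_sub_policyValue (π : A → ℝ) (r : A → S → ℝ) (γ : ℝ) (v w : S → ℝ)
    (p : A → S → ℝ) :
    policyValue π r γ v p - policyValue π r γ w p =
      γ * ∑ s', (∑ a, π a • p a) s' * (v s' - w s') := by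
  simp only [policyValue, Finset.sum_apply, Pi.smul_apply, smul_eq_mul, Finset.mul_sum,
    Finset.sum_mul, ← Finset.sum_sub_distrib]
  rw [Finset.sum_comm]
  refine Finset.sum_congr rfl fun s' _ => Finset.sum_congr rfl fun a _ => ?_
  ring

theorem sum_smul_mem_stdSimplex {π : A → ℝ} (hπ : π ∈ stdSimplex ℝ A) {p : A → S → ℝ}
    (hp : ∀ a, p a ∈ stdSimplex ℝ S) : ∑ a, π a • p a ∈ stdSimplex ℝ S :=
  (convex_stdSimplex ℝ S).sum_mem (fun a _ => hπ.1 a) hπ.2 fun a _ => hp a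

end PolicyEvaluation

theorem robust_bellman_policy_update_lower_linear_bound_general
    {S A : Type*} [Fintype S] [Fintype A]
    (γ : ℝ)
    (r : S → A → S → ℝ)
    (P : S → Set (A → S → ℝ))
    (hPne : ∀ s, (P s).Nonempty)
    (hPcompact : ∀ s, IsCompact (P s))
    (hPsub : ∀ s, ∀ p ∈ P s, ∀ a, p a ∈ stdSimplex ℝ S)
    (π : S → A → ℝ) (hπ : ∀ s, π s ∈ stdSimplex ℝ A)
    (Lpi : (S → ℝ) → (S → ℝ))
    (hLpi : ∀ v s, Lpi v s =
      sInf ((fun p : A → S → ℝ =>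
        ∑ a, π s a * ∑ s', p a s' * (r s a s' + γ * v s')) '' P s)) :
    ∀ x y : S → ℝ, ∃ Pm : S → S → ℝ,
      (∀ s s', 0 ≤ Pm s s') ∧
      (∀ s, ∑ s', Pm s s' = 1) ∧
      (∀ s, γ * ∑ s', Pm s s' * (x s' - y s') ≤ Lpi x s - Lpi y s) := by
  intro x y
  have hLpi_eq : ∀ v s, Lpi v s = sInf (policyValue (π s) (r s) γ v '' P s) := hLpi
  choose p hpP hp_le using fun s => (hPcompact s).exists_sub_le_sInf_image_sub (hPne s)
    (continuous_policyValue (π s) (r s) γ x) (continuous_policyValue (π s) (r s) γ y)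
  have hrow : ∀ s, ∑ a, π s a • p s a ∈ stdSimplex ℝ S := fun s =>
    sum_smul_mem_stdSimplex (hπ s) (hPsub s (p s) (hpP s))
  refine ⟨fun s => ∑ a, π s a • p s a, fun s => (hrow s).1, fun s => (hrow s).2, fun s => ?_⟩
  rw [hLpi_eq, hLpi_eq, ← policyValue_sub_policyValue]
  exact hp_le s

/-- For every policy π and all `x, y`, there exists a row-stochastic
matrix `Pm` such that `Lpi x − Lpi y ≥ γ · Pm (x − y)` componentwise. -/
theorem robust_bellman_policy_update_lower_linear_bound
    {S A : Type*} [Fintype S] [Nonempty S] [Fintype A] [Nonempty A]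
    (γ : ℝ) (hγ0 : 0 < γ) (hγ1 : γ < 1)
    (r : S → A → S → ℝ)
    (P : S → Set (A → S → ℝ))
    (hPne : ∀ s, (P s).Nonempty)
    (hPcompact : ∀ s, IsCompact (P s))
    (hPsub : ∀ s, ∀ p ∈ P s, ∀ a, p a ∈ stdSimplex ℝ S)
    (π : S → A → ℝ) (hπ : ∀ s, π s ∈ stdSimplex ℝ A)
    (Lpi : (S → ℝ) → (S → ℝ))
    (hLpi : ∀ v s, Lpi v s =
      sInf ((fun p : A → S → ℝ =>
        ∑ a, π s a * ∑ s', p a s' * (r s a s' + γ * v s')) '' P s)) :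
    ∀ x y : S → ℝ, ∃ Pm : S → S → ℝ,
      (∀ s s', 0 ≤ Pm s s') ∧
      (∀ s, ∑ s', Pm s s' = 1) ∧
      (∀ s, γ * ∑ s', Pm s s' * (x s' - y s') ≤ Lpi x s - Lpi y s) :=
  robust_bellman_policy_update_lower_linear_bound_general γ r P hPne hPcompact hPsub π hπ Lpi hLpi
end

section
/- Let v ∈ ℝ^S and let π be a policy that is greedy for v, i.e. L_π v = L v. Then the robust value function v_π (the unique fixed point of L_π) satisfies ‖v* − v_π‖∞ ≤ (2/(1−γ)) ‖L v − v‖∞, where v* is the unique fixed point of L. -/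
/-!
Both `L_π` and `L` are `γ`-contractions of the sup norm: for fixed `d` and `p` the one-step
lookahead is `γ`-Lipschitz in `v` because `d` and every `p a` are probability vectors, and an
infimum over `p` followed by a supremum over `d` preserves this. A `K`-contraction `T` with fixed
point `x` satisfies `‖x - v‖ ≤ ‖T v - v‖ / (1 - K)`; applying this to `L` and to `L_π`, whose
values at `v` agree, and going through `v` by the triangle inequality gives the bound.
-/

open Finset Set NNReal

theorem sum_mul_le_of_mem_stdSimplex {ι : Type*} [Fintype ι] {w x : ι → ℝ}
    (hw : w ∈ stdSimplex ℝ ι) {C : ℝ} (hx : ∀ i, x i ≤ C) : ∑ i, w i * x i ≤ C :=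
  calc ∑ i, w i * x i ≤ ∑ i, w i * C :=
        sum_le_sum fun i _ => mul_le_mul_of_nonneg_left (hx i) (hw.1 i)
    _ = C := by rw [← sum_mul, hw.2, one_mul]

theorem csInf_image_le_csInf_image_add {ι : Type*} {X : Set ι} (hX : X.Nonempty) {f g : ι → ℝ}
    (hf : BddBelow (f '' X)) {c : ℝ} (h : ∀ i ∈ X, f i ≤ g i + c) :
    sInf (f '' X) ≤ sInf (g '' X) + c := by
  rw [← sub_le_iff_le_add]
  refine le_csInf (hX.image g) ?_
  rintro _ ⟨i, hi, rfl⟩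
  exact sub_le_iff_le_add.2 ((csInf_le hf (mem_image_of_mem f hi)).trans (h i hi))

theorem csSup_image_le_csSup_image_add {ι : Type*} {X : Set ι} (hX : X.Nonempty) {f g : ι → ℝ}
    (hg : BddAbove (g '' X)) {c : ℝ} (h : ∀ i ∈ X, f i ≤ g i + c) :
    sSup (f '' X) ≤ sSup (g '' X) + c := by
  refine csSup_le (hX.image f) ?_
  rintro _ ⟨i, hi, rfl⟩
  exact (h i hi).trans (add_le_add_left (le_csSup hg (mem_image_of_mem g hi)) c)

theorem LipschitzWith.of_apply_le_add_mul {α ι : Type*} [PseudoMetricSpace α] [Fintype ι]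
    {T : α → ι → ℝ} (K : ℝ≥0) (h : ∀ x y i, T x i ≤ T y i + K * dist x y) :
    LipschitzWith K T :=
  LipschitzWith.of_dist_le_mul fun x y => (dist_pi_le_iff (by positivity)).2 fun i =>
    (LipschitzWith.of_le_add_mul K (h · · i)).dist_le_mul x y

section Lookahead

variable {S A : Type*} [Fintype S] [Fintype A]

/- At a state `s`, with `Q = P s` and `r = r s`, `worstCaseLookahead Q γ r (π s) v` is
`(L_π v) s` and `optimalLookahead Q γ r v` is `(L v) s`. -/
def lookahead (γ : ℝ) (r : A → S → ℝ) (d : A → ℝ) (p : A → S → ℝ) (v : S → ℝ) : ℝ :=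
  ∑ a, d a * ∑ s', p a s' * (r a s' + γ * v s')

noncomputable def worstCaseLookahead (Q : Set (A → S → ℝ)) (γ : ℝ) (r : A → S → ℝ) (d : A → ℝ)
    (v : S → ℝ) : ℝ :=
  sInf ((fun p => lookahead γ r d p v) '' Q)

noncomputable def optimalLookahead (Q : Set (A → S → ℝ)) (γ : ℝ) (r : A → S → ℝ)
    (v : S → ℝ) : ℝ :=
  sSup ((fun d => worstCaseLookahead Q γ r d v) '' stdSimplex ℝ A)

variable {γ : ℝ} {r : A → S → ℝ} {Q : Set (A → S → ℝ)}

theorem continuous_lookahead (γ : ℝ) (r : A → S → ℝ) (v : S → ℝ) :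
    Continuous fun dp : (A → ℝ) × (A → S → ℝ) => lookahead γ r dp.1 dp.2 v := by
  unfold lookahead; fun_prop

theorem lookahead_le_add_mul_dist (hγ : 0 ≤ γ) {d : A → ℝ} (hd : d ∈ stdSimplex ℝ A)
    {p : A → S → ℝ} (hp : ∀ a, p a ∈ stdSimplex ℝ S) (u w : S → ℝ) :
    lookahead γ r d p u ≤ lookahead γ r d p w + γ * dist u w := by
  have hsplit : lookahead γ r d p u =
      lookahead γ r d p w + ∑ a, d a * ∑ s', p a s' * (γ * (u s' - w s')) := by
    simp only [lookahead, ← sum_add_distrib, ← mul_add]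
    congr! 3
    ring
  have hstep (s' : S) : γ * (u s' - w s') ≤ γ * dist u w :=
    mul_le_mul_of_nonneg_left
      ((le_abs_self _).trans (Real.dist_eq (u s') (w s') ▸ dist_le_pi_dist u w s')) hγ
  rw [hsplit]
  gcongr
  exact sum_mul_le_of_mem_stdSimplex hd fun a => sum_mul_le_of_mem_stdSimplex (hp a) hstep

theorem bddBelow_lookahead_image (hQ : IsCompact Q) (d : A → ℝ) (v : S → ℝ) :
    BddBelow ((fun p => lookahead γ r d p v) '' Q) :=
  (hQ.image ((continuous_lookahead γ r v).comp (Continuous.prodMk_right d))).bddBelow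

theorem worstCaseLookahead_le_add_mul_dist (hγ : 0 ≤ γ) (hQne : Q.Nonempty) (hQ : IsCompact Q)
    (hQsub : ∀ p ∈ Q, ∀ a, p a ∈ stdSimplex ℝ S) {d : A → ℝ} (hd : d ∈ stdSimplex ℝ A)
    (u w : S → ℝ) :
    worstCaseLookahead Q γ r d u ≤ worstCaseLookahead Q γ r d w + γ * dist u w :=
  csInf_image_le_csInf_image_add hQne (bddBelow_lookahead_image hQ d u) fun p hp =>
    lookahead_le_add_mul_dist hγ hd (hQsub p hp) u w

theorem bddAbove_worstCaseLookahead_image (hQne : Q.Nonempty) (hQ : IsCompact Q) (v : S → ℝ) :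
    BddAbove ((fun d => worstCaseLookahead Q γ r d v) '' stdSimplex ℝ A) := by
  obtain ⟨p, hp⟩ := hQne
  obtain ⟨M, hM⟩ := (isCompact_stdSimplex ℝ A).bddAbove_image
    ((continuous_lookahead γ r v).comp (Continuous.prodMk_left p)).continuousOn
  refine ⟨M, ?_⟩
  rintro _ ⟨d, hd, rfl⟩
  exact (csInf_le (bddBelow_lookahead_image hQ d v) (mem_image_of_mem _ hp)).trans
    (hM (mem_image_of_mem _ hd))

theorem optimalLookahead_le_add_mul_dist [Nonempty A] (hγ : 0 ≤ γ) (hQne : Q.Nonempty)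
    (hQ : IsCompact Q) (hQsub : ∀ p ∈ Q, ∀ a, p a ∈ stdSimplex ℝ S) (u w : S → ℝ) :
    optimalLookahead Q γ r u ≤ optimalLookahead Q γ r w + γ * dist u w :=
  csSup_image_le_csSup_image_add (Set.nonempty_coe_sort.mp inferInstance)
    (bddAbove_worstCaseLookahead_image hQne hQ w) fun _ hd =>
      worstCaseLookahead_le_add_mul_dist hγ hQne hQ hQsub hd u w

end Lookahead

theorem greedy_policy_optimality_gap_bound_general
    {S A : Type*} [Fintype S] [Fintype A] [Nonempty A]
    (γ : ℝ) (hγ0 : 0 < γ) (hγ1 : γ < 1)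
    (r : S → A → S → ℝ)
    (P : S → Set (A → S → ℝ))
    (hPne : ∀ s, (P s).Nonempty)
    (hPcompact : ∀ s, IsCompact (P s))
    (hPsub : ∀ s, ∀ p ∈ P s, ∀ a, p a ∈ stdSimplex ℝ S)
    (π : S → A → ℝ) (hπ : ∀ s, π s ∈ stdSimplex ℝ A)
    (Lpi : (S → ℝ) → (S → ℝ))
    (hLpi : ∀ v s, Lpi v s =
      sInf ((fun p : A → S → ℝ =>
        ∑ a, π s a * ∑ s', p a s' * (r s a s' + γ * v s')) '' P s))
    (L : (S → ℝ) → (S → ℝ))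
    (hL : ∀ v s, L v s =
      sSup ((fun d : A → ℝ =>
        sInf ((fun p : A → S → ℝ =>
          ∑ a, d a * ∑ s', p a s' * (r s a s' + γ * v s')) '' P s)) '' stdSimplex ℝ A))
    (v : S → ℝ) (hgreedy : Lpi v = L v)
    (vpi : S → ℝ) (hvpi : Lpi vpi = vpi)
    (vstar : S → ℝ) (hvstar : L vstar = vstar) :
    ‖vstar - vpi‖ ≤ (2 / (1 - γ)) * ‖L v - v‖ := by
  set K : ℝ≥0 := ⟨γ, hγ0.le⟩
  have hK : K < 1 := hγ1
  have hLpi_contr : ContractingWith K Lpi := ⟨hK, .of_apply_le_add_mul K fun u w s => by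
    rw [hLpi, hLpi]
    exact worstCaseLookahead_le_add_mul_dist hγ0.le (hPne s) (hPcompact s) (hPsub s) (hπ s) u w⟩
  have hL_contr : ContractingWith K L := ⟨hK, .of_apply_le_add_mul K fun u w s => by
    rw [hL, hL]
    exact optimalLookahead_le_add_mul_dist hγ0.le (hPne s) (hPcompact s) (hPsub s) u w⟩
  have hstar := hL_contr.dist_le_of_fixedPoint v hvstar
  have hpi := hLpi_contr.dist_le_of_fixedPoint v hvpi
  rw [hgreedy] at hpi
  calc ‖vstar - vpi‖ = dist vstar vpi := (dist_eq_norm _ _).symm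
    _ ≤ dist v vstar + dist v vpi := dist_triangle_left _ _ _
    _ ≤ dist v (L v) / (1 - γ) + dist v (L v) / (1 - γ) := add_le_add hstar hpi
    _ = 2 / (1 - γ) * ‖L v - v‖ := by rw [dist_comm, dist_eq_norm]; ring

/-- If π is greedy for `v` (i.e. `Lpi v = L v`), then the robust value
function `vpi` of π satisfies `‖vstar − vpi‖∞ ≤ (2/(1−γ)) ‖L v − v‖∞`. -/
theorem greedy_policy_optimality_gap_bound
    {S A : Type*} [Fintype S] [Nonempty S] [Fintype A] [Nonempty A]
    (γ : ℝ) (hγ0 : 0 < γ) (hγ1 : γ < 1)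
    (r : S → A → S → ℝ)
    (P : S → Set (A → S → ℝ))
    (hPne : ∀ s, (P s).Nonempty)
    (hPcompact : ∀ s, IsCompact (P s))
    (hPsub : ∀ s, ∀ p ∈ P s, ∀ a, p a ∈ stdSimplex ℝ S)
    (π : S → A → ℝ) (hπ : ∀ s, π s ∈ stdSimplex ℝ A)
    (Lpi : (S → ℝ) → (S → ℝ))
    (hLpi : ∀ v s, Lpi v s =
      sInf ((fun p : A → S → ℝ =>
        ∑ a, π s a * ∑ s', p a s' * (r s a s' + γ * v s')) '' P s))
    (L : (S → ℝ) → (S → ℝ))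
    (hL : ∀ v s, L v s =
      sSup ((fun d : A → ℝ =>
        sInf ((fun p : A → S → ℝ =>
          ∑ a, d a * ∑ s', p a s' * (r s a s' + γ * v s')) '' P s)) '' stdSimplex ℝ A))
    (v : S → ℝ) (hgreedy : Lpi v = L v)
    (vpi : S → ℝ) (hvpi : Lpi vpi = vpi)
    (vstar : S → ℝ) (hvstar : L vstar = vstar) :
    ‖vstar - vpi‖ ≤ (2 / (1 - γ)) * ‖L v - v‖ :=
  greedy_policy_optimality_gap_bound_general γ hγ0 hγ1 r P hPne hPcompact hPsub π hπ Lpi hLpi L hL v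
    hgreedy vpi hvpi vstar hvstar
end

section
/- (Convergence of Partial Policy Iteration.) Let c > 1 and let (ε_k)_{k≥1} be positive reals with ε_{k+1} ≤ γ^c ε_k for all k ≥ 1. Let (v_k)_{k≥0} ⊆ ℝ^S and policies (π_k)_{k≥1} satisfy, for every k ≥ 1: (i) π_k is greedy for v_{k−1}, i.e. L_{π_k} v_{k−1} = L v_{k−1}, and (ii) ‖L_{π_k} v_k − v_k‖∞ ≤ (1−γ) ε_k. Then for every k ≥ 1, ‖v* − v_{π_{k+1}}‖∞ ≤ γ^k ( ‖v* − v_{π_1}‖∞ + 2 ε_1 / ((1 − γ^{c−1})(1 − γ)) ), where v_{π_j} denotes the unique fixed point of L_{π_j} and v* the unique fixed point of L. -/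
open Finset

section helpers

variable {S : Type*} [Fintype S] [Nonempty S]

omit [Nonempty S] in
lemma wsum_le {p : S → ℝ} (hp : p ∈ stdSimplex ℝ S) {x : S → ℝ} {b : ℝ}
    (hx : ∀ s, x s ≤ b) : ∑ s, p s * x s ≤ b := by
  calc ∑ s, p s * x s ≤ ∑ s, p s * b := by
        apply Finset.sum_le_sum
        intro i _
        exact mul_le_mul_of_nonneg_left (hx i) (hp.1 i)
    _ = b := by rw [← Finset.sum_mul, hp.2, one_mul]

omit [Nonempty S] in
lemma le_wsum {p : S → ℝ} (hp : p ∈ stdSimplex ℝ S) {x : S → ℝ} {b : ℝ}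
    (hx : ∀ s, b ≤ x s) : b ≤ ∑ s, p s * x s := by
  calc b = ∑ s, p s * b := by rw [← Finset.sum_mul, hp.2, one_mul]
    _ ≤ ∑ s, p s * x s := by
        apply Finset.sum_le_sum
        intro i _
        exact mul_le_mul_of_nonneg_left (hx i) (hp.1 i)

/-- Generic fixed-point comparison. -/
lemma fp_le {γ : ℝ} (hγ1 : γ < 1)
    (T : (S → ℝ) → (S → ℝ))
    (hT : ∀ (v w : S → ℝ) (t : ℝ), (∀ s, v s ≤ w s + t) → ∀ s, T v s ≤ T w s + γ * t)
    (w u : S → ℝ) (δ : ℝ)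
    (hw : T w = w) (hu : ∀ s, u s ≤ T u s + δ) :
    ∀ s, u s ≤ w s + δ / (1 - γ) := by
  classical
  have h1γ : (0:ℝ) < 1 - γ := by linarith
  set m := Finset.univ.sup' Finset.univ_nonempty (fun s => u s - w s) with hmdef
  have hm : ∀ s, u s ≤ w s + m := by
    intro s
    have := Finset.le_sup' (fun s => u s - w s) (Finset.mem_univ s)
    rw [← hmdef] at this
    linarith
  have h2 : ∀ s, T u s ≤ w s + γ * m := by
    intro s
    have := hT u w m hm s
    rw [hw] at this
    exact this
  have h4 : m ≤ γ * m + δ := by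
    rw [hmdef]
    apply Finset.sup'_le
    intro s _
    have h5 := hu s
    have h6 := h2 s
    linarith
  have h5 : m ≤ δ / (1 - γ) := by
    rw [le_div_iff₀ h1γ]
    nlinarith
  intro s
  have := hm s
  linarith

end helpers

/-- Convergence of Partial Policy Iteration. If `ε (k+1) ≤ γ^c · ε k`
with `c > 1`, each `π k` is greedy for `v (k-1)`, and
`‖Lpol (π k) (v k) − v k‖∞ ≤ (1−γ) ε k`, then for every `k ≥ 1`,
`‖vstar − vpi (k+1)‖∞ ≤ γ^k (‖vstar − vpi 1‖∞ + 2 ε 1 / ((1 − γ^(c−1))(1 − γ)))`. -/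
theorem partial_policy_iteration_convergence
    {S A : Type*} [Fintype S] [Nonempty S] [Fintype A] [Nonempty A]
    (γ : ℝ) (hγ0 : 0 < γ) (hγ1 : γ < 1)
    (r : S → A → S → ℝ)
    (P : S → Set (A → S → ℝ))
    (hPne : ∀ s, (P s).Nonempty)
    (hPcompact : ∀ s, IsCompact (P s))
    (hPsub : ∀ s, ∀ p ∈ P s, ∀ a, p a ∈ stdSimplex ℝ S)
    (Lpol : (S → A → ℝ) → (S → ℝ) → (S → ℝ))
    (hLpol : ∀ (π : S → A → ℝ) (v : S → ℝ) (s : S), Lpol π v s =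
      sInf ((fun p : A → S → ℝ =>
        ∑ a, π s a * ∑ s', p a s' * (r s a s' + γ * v s')) '' P s))
    (L : (S → ℝ) → (S → ℝ))
    (hL : ∀ v s, L v s =
      sSup ((fun d : A → ℝ =>
        sInf ((fun p : A → S → ℝ =>
          ∑ a, d a * ∑ s', p a s' * (r s a s' + γ * v s')) '' P s)) '' stdSimplex ℝ A))
    (c : ℝ) (hc : 1 < c)
    (ε : ℕ → ℝ) (hεpos : ∀ k, 1 ≤ k → 0 < ε k)
    (hεdec : ∀ k, 1 ≤ k → ε (k + 1) ≤ γ ^ c * ε k)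
    (v : ℕ → S → ℝ) (π : ℕ → S → A → ℝ)
    (hπpol : ∀ k, 1 ≤ k → ∀ s, π k s ∈ stdSimplex ℝ A)
    (hgreedy : ∀ k, 1 ≤ k → Lpol (π k) (v (k - 1)) = L (v (k - 1)))
    (heval : ∀ k, 1 ≤ k → ‖Lpol (π k) (v k) - v k‖ ≤ (1 - γ) * ε k)
    (vpi : ℕ → S → ℝ) (hvpi : ∀ k, 1 ≤ k → Lpol (π k) (vpi k) = vpi k)
    (vstar : S → ℝ) (hvstar : L vstar = vstar) :
    ∀ k, 1 ≤ k →
      ‖vstar - vpi (k + 1)‖ ≤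
        γ ^ k * (‖vstar - vpi 1‖ + 2 * ε 1 / ((1 - γ ^ (c - 1)) * (1 - γ))) := by
  have h1γ : (0:ℝ) < 1 - γ := by linarith
  -- pointwise comparison of the inner expressions
  have key : ∀ (d : A → ℝ), d ∈ stdSimplex ℝ A → ∀ (vv ww : S → ℝ) (t : ℝ),
      (∀ s, vv s ≤ ww s + t) → ∀ (s : S) (p : A → S → ℝ), p ∈ P s →
      ∑ a, d a * ∑ s', p a s' * (r s a s' + γ * vv s') ≤
      (∑ a, d a * ∑ s', p a s' * (r s a s' + γ * ww s')) + γ * t := by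
    intro d hd vv ww t h s p hp
    have inner : ∀ a, ∑ s', p a s' * (r s a s' + γ * vv s') ≤
        (∑ s', p a s' * (r s a s' + γ * ww s')) + γ * t := by
      intro a
      have hpa := hPsub s p hp a
      have h1 : ∑ s', p a s' * (r s a s' + γ * vv s') ≤
          ∑ s', p a s' * (r s a s' + γ * ww s' + γ * t) := by
        apply Finset.sum_le_sum
        intro i _
        apply mul_le_mul_of_nonneg_left _ (hpa.1 i)
        have := h i
        nlinarith
      have h2 : ∑ s', p a s' * (r s a s' + γ * ww s' + γ * t) =
          (∑ s', p a s' * (r s a s' + γ * ww s')) + γ * t := by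
        have : ∀ s', p a s' * (r s a s' + γ * ww s' + γ * t) =
            p a s' * (r s a s' + γ * ww s') + p a s' * (γ * t) := fun s' => by ring
        rw [Finset.sum_congr rfl (fun i _ => this i), Finset.sum_add_distrib,
          ← Finset.sum_mul, hpa.2, one_mul]
      linarith
    have h3 : ∑ a, d a * ∑ s', p a s' * (r s a s' + γ * vv s') ≤
        ∑ a, d a * ((∑ s', p a s' * (r s a s' + γ * ww s')) + γ * t) :=
      Finset.sum_le_sum fun a _ => mul_le_mul_of_nonneg_left (inner a) (hd.1 a)
    have h4 : ∑ a, d a * ((∑ s', p a s' * (r s a s' + γ * ww s')) + γ * t) =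
        (∑ a, d a * ∑ s', p a s' * (r s a s' + γ * ww s')) + γ * t := by
      have : ∀ a, d a * ((∑ s', p a s' * (r s a s' + γ * ww s')) + γ * t) =
          d a * (∑ s', p a s' * (r s a s' + γ * ww s')) + d a * (γ * t) := fun a => by ring
      rw [Finset.sum_congr rfl (fun a _ => this a), Finset.sum_add_distrib,
        ← Finset.sum_mul, hd.2, one_mul]
    linarith
  -- global bounds
  have hFlb : ∀ (d : A → ℝ), d ∈ stdSimplex ℝ A → ∀ (vv : S → ℝ) (s : S)
      (p : A → S → ℝ), p ∈ P s →
      Finset.univ.inf' Finset.univ_nonempty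
        (fun a => Finset.univ.inf' Finset.univ_nonempty (fun s' => r s a s' + γ * vv s')) ≤
      ∑ a, d a * ∑ s', p a s' * (r s a s' + γ * vv s') := by
    intro d hd vv s p hp
    apply le_wsum hd
    intro a
    apply le_wsum (hPsub s p hp a)
    intro s'
    exact le_trans (Finset.inf'_le _ (Finset.mem_univ a)) (Finset.inf'_le _ (Finset.mem_univ s'))
  have hFub : ∀ (d : A → ℝ), d ∈ stdSimplex ℝ A → ∀ (vv : S → ℝ) (s : S)
      (p : A → S → ℝ), p ∈ P s →
      ∑ a, d a * ∑ s', p a s' * (r s a s' + γ * vv s') ≤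
      Finset.univ.sup' Finset.univ_nonempty
        (fun a => Finset.univ.sup' Finset.univ_nonempty (fun s' => r s a s' + γ * vv s')) := by
    intro d hd vv s p hp
    apply wsum_le hd
    intro a
    apply wsum_le (hPsub s p hp a)
    intro s'
    exact le_trans
      (Finset.le_sup' (fun s'' => r s a s'' + γ * vv s'') (Finset.mem_univ s'))
      (Finset.le_sup' (fun a' => Finset.univ.sup' Finset.univ_nonempty
        (fun s'' => r s a' s'' + γ * vv s'')) (Finset.mem_univ a))
  have hBdd : ∀ (d : A → ℝ), d ∈ stdSimplex ℝ A → ∀ (vv : S → ℝ) (s : S),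
      BddBelow ((fun p : A → S → ℝ =>
        ∑ a, d a * ∑ s', p a s' * (r s a s' + γ * vv s')) '' P s) := by
    intro d hd vv s
    refine ⟨Finset.univ.inf' Finset.univ_nonempty
      (fun a => Finset.univ.inf' Finset.univ_nonempty (fun s' => r s a s' + γ * vv s')), ?_⟩
    rintro y ⟨p, hp, rfl⟩
    exact hFlb d hd vv s p hp
  have hNeI : ∀ (d : A → ℝ) (vv : S → ℝ) (s : S),
      ((fun p : A → S → ℝ =>
        ∑ a, d a * ∑ s', p a s' * (r s a s' + γ * vv s')) '' P s).Nonempty :=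
    fun d vv s => (hPne s).image _
  -- comparison of sInfs
  have hInfComp : ∀ (d : A → ℝ), d ∈ stdSimplex ℝ A → ∀ (vv ww : S → ℝ) (t : ℝ),
      (∀ s, vv s ≤ ww s + t) → ∀ s : S,
      sInf ((fun p : A → S → ℝ =>
        ∑ a, d a * ∑ s', p a s' * (r s a s' + γ * vv s')) '' P s) ≤
      sInf ((fun p : A → S → ℝ =>
        ∑ a, d a * ∑ s', p a s' * (r s a s' + γ * ww s')) '' P s) + γ * t := by
    intro d hd vv ww t h s
    have hmain : sInf ((fun p : A → S → ℝ =>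
        ∑ a, d a * ∑ s', p a s' * (r s a s' + γ * vv s')) '' P s) - γ * t ≤
        sInf ((fun p : A → S → ℝ =>
        ∑ a, d a * ∑ s', p a s' * (r s a s' + γ * ww s')) '' P s) := by
      apply le_csInf (hNeI d ww s)
      rintro y ⟨p, hp, rfl⟩
      have h1 := csInf_le (hBdd d hd vv s) (Set.mem_image_of_mem _ hp)
      have h2 := key d hd vv ww t h s p hp
      linarith
    linarith
  -- monotone-shift for Lpol
  have hA1 : ∀ (π₀ : S → A → ℝ), (∀ s, π₀ s ∈ stdSimplex ℝ A) →
      ∀ (vv ww : S → ℝ) (t : ℝ), (∀ s, vv s ≤ ww s + t) →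
      ∀ s, Lpol π₀ vv s ≤ Lpol π₀ ww s + γ * t := by
    intro π₀ hπ₀ vv ww t h s
    rw [hLpol, hLpol]
    exact hInfComp (π₀ s) (hπ₀ s) vv ww t h s
  -- the image for L is nonempty and bounded above
  haveI : DecidableEq A := Classical.decEq A
  have hSimplexNe : (stdSimplex ℝ A).Nonempty :=
    ⟨_, ite_eq_mem_stdSimplex ℝ (Classical.arbitrary A)⟩
  have hYub : ∀ (vv : S → ℝ) (s : S), ∀ y ∈ ((fun d : A → ℝ =>
      sInf ((fun p : A → S → ℝ =>
        ∑ a, d a * ∑ s', p a s' * (r s a s' + γ * vv s')) '' P s)) '' stdSimplex ℝ A),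
      y ≤ Finset.univ.sup' Finset.univ_nonempty
        (fun a => Finset.univ.sup' Finset.univ_nonempty (fun s' => r s a s' + γ * vv s')) := by
    intro vv s y hy
    obtain ⟨d, hd, rfl⟩ := hy
    obtain ⟨p₀, hp₀⟩ := hPne s
    have h1 := csInf_le (hBdd d hd vv s) (Set.mem_image_of_mem _ hp₀)
    have h2 := hFub d hd vv s p₀ hp₀
    exact le_trans h1 h2
  have hBddY : ∀ (vv : S → ℝ) (s : S), BddAbove ((fun d : A → ℝ =>
      sInf ((fun p : A → S → ℝ =>
        ∑ a, d a * ∑ s', p a s' * (r s a s' + γ * vv s')) '' P s)) '' stdSimplex ℝ A) :=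
    fun vv s => ⟨_, fun y hy => hYub vv s y hy⟩
  -- monotone-shift for L
  have hB1 : ∀ (vv ww : S → ℝ) (t : ℝ), (∀ s, vv s ≤ ww s + t) →
      ∀ s, L vv s ≤ L ww s + γ * t := by
    intro vv ww t h s
    rw [hL, hL]
    apply csSup_le (hSimplexNe.image _)
    rintro y ⟨d, hd, rfl⟩
    have h1 := hInfComp d hd vv ww t h s
    have h2 := le_csSup (hBddY ww s) (Set.mem_image_of_mem _ hd)
    simp only at h1 h2 ⊢
    linarith
  -- Lpol ≤ L
  have hC : ∀ (π₀ : S → A → ℝ), (∀ s, π₀ s ∈ stdSimplex ℝ A) →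
      ∀ (vv : S → ℝ) (s : S), Lpol π₀ vv s ≤ L vv s := by
    intro π₀ hπ₀ vv s
    rw [hLpol, hL]
    exact le_csSup (hBddY vv s) (Set.mem_image_of_mem _ (hπ₀ s))
  -- pointwise norm bound
  have hnorm_pt : ∀ (vv ww : S → ℝ) (s : S), vv s - ww s ≤ ‖vv - ww‖ := by
    intro vv ww s
    have h := norm_le_pi_norm (vv - ww) s
    rw [Real.norm_eq_abs] at h
    calc vv s - ww s = (vv - ww) s := by simp
      _ ≤ |(vv - ww) s| := le_abs_self _
      _ ≤ _ := h
  -- norm contraction for Lpol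
  have hcontr : ∀ (π₀ : S → A → ℝ), (∀ s, π₀ s ∈ stdSimplex ℝ A) →
      ∀ (vv ww : S → ℝ), ‖Lpol π₀ vv - Lpol π₀ ww‖ ≤ γ * ‖vv - ww‖ := by
    intro π₀ hπ₀ vv ww
    rw [pi_norm_le_iff_of_nonneg (mul_nonneg hγ0.le (norm_nonneg _))]
    intro s
    rw [Real.norm_eq_abs, abs_le]
    constructor
    · have h := hA1 π₀ hπ₀ ww vv (‖vv - ww‖) (fun s => by
        have := hnorm_pt ww vv s
        rw [norm_sub_rev] at this
        linarith) s
      simp only [Pi.sub_apply]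
      linarith
    · have h := hA1 π₀ hπ₀ vv ww (‖vv - ww‖) (fun s => by
        have := hnorm_pt vv ww s
        linarith) s
      simp only [Pi.sub_apply]
      linarith
  -- pointwise contraction for L
  have hLpt : ∀ (vv ww : S → ℝ) (s : S), L vv s ≤ L ww s + γ * ‖vv - ww‖ := by
    intro vv ww s
    exact hB1 vv ww (‖vv - ww‖) (fun s => by linarith [hnorm_pt vv ww s]) s
  -- optimality of vstar
  have hopt : ∀ j, 1 ≤ j → ∀ s, vpi j s ≤ vstar s := by
    intro j hj
    have h := fp_le hγ1 L hB1 vstar (vpi j) 0 hvstar (fun s => by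
      have h1 : Lpol (π j) (vpi j) s = vpi j s := congrFun (hvpi j hj) s
      have h2 := hC (π j) (hπpol j hj) (vpi j) s
      linarith)
    intro s
    have := h s
    simp at this
    linarith
  -- lower bound for v k against vpi (k+1)
  have hlow : ∀ k, 1 ≤ k → ∀ s, v k s ≤ vpi (k + 1) s + ε k := by
    intro k hk
    have hk1 : 1 ≤ k + 1 := by omega
    have hgr := hgreedy (k + 1) hk1
    rw [Nat.add_sub_cancel] at hgr
    have hu : ∀ s, v k s ≤ Lpol (π (k + 1)) (v k) s + (1 - γ) * ε k := by
      intro s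
      have h1 := hC (π k) (hπpol k hk) (v k) s
      have h2 : v k s - Lpol (π k) (v k) s ≤ (1 - γ) * ε k := by
        have h3 := hnorm_pt (v k) (Lpol (π k) (v k)) s
        have h4 := heval k hk
        rw [norm_sub_rev] at h4
        linarith
      rw [congrFun hgr s]
      linarith
    have h := fp_le hγ1 (Lpol (π (k + 1))) (hA1 (π (k + 1)) (hπpol (k + 1) hk1))
      (vpi (k + 1)) (v k) ((1 - γ) * ε k) (hvpi (k + 1) hk1) hu
    intro s
    have h2 := h s
    rw [mul_div_assoc] at h2
    rw [show (1 - γ) * (ε k / (1 - γ)) = ε k by field_simp] at h2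
    exact h2
  -- main step bound
  have hstep : ∀ k, 1 ≤ k → ‖vstar - vpi (k + 1)‖ ≤ γ * ‖vstar - v k‖ + γ * ε k := by
    intro k hk
    have hk1 : 1 ≤ k + 1 := by omega
    have hgr := hgreedy (k + 1) hk1
    rw [Nat.add_sub_cancel] at hgr
    have hub : ∀ s, vstar s - vpi (k + 1) s ≤ γ * ‖vstar - v k‖ + γ * ε k := by
      intro s
      have h1 := hA1 (π (k + 1)) (hπpol (k + 1) hk1) (v k) (vpi (k + 1)) (ε k) (hlow k hk) s
      rw [congrFun (hvpi (k + 1) hk1) s, congrFun hgr s] at h1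
      have h2 := hLpt vstar (v k) s
      rw [congrFun hvstar s] at h2
      linarith
    rw [pi_norm_le_iff_of_nonneg (add_nonneg (mul_nonneg hγ0.le (norm_nonneg _))
      (mul_nonneg hγ0.le (hεpos k hk).le))]
    intro s
    rw [Real.norm_eq_abs, Pi.sub_apply, abs_of_nonneg (by linarith [hopt (k + 1) hk1 s])]
    exact hub s
  -- distance from v k to vpi k
  have hvk : ∀ k, 1 ≤ k → ‖vstar - v k‖ ≤ ‖vstar - vpi k‖ + ε k := by
    intro k hk
    have h1 : ‖v k - vpi k‖ ≤ ε k := by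
      have h2 : ‖v k - vpi k‖ ≤ ‖v k - Lpol (π k) (v k)‖ + ‖Lpol (π k) (v k) - vpi k‖ := by
        have := dist_triangle (v k) (Lpol (π k) (v k)) (vpi k)
        simpa [dist_eq_norm] using this
      have h3 : ‖Lpol (π k) (v k) - vpi k‖ ≤ γ * ‖v k - vpi k‖ := by
        have h4 := hcontr (π k) (hπpol k hk) (v k) (vpi k)
        rw [hvpi k hk] at h4
        exact h4
      have h4 : ‖v k - Lpol (π k) (v k)‖ = ‖Lpol (π k) (v k) - v k‖ := norm_sub_rev _ _
      have h5 := heval k hk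
      nlinarith
    calc ‖vstar - v k‖ ≤ ‖vstar - vpi k‖ + ‖vpi k - v k‖ := by
          have := dist_triangle vstar (vpi k) (v k)
          simpa [dist_eq_norm] using this
      _ ≤ ‖vstar - vpi k‖ + ε k := by rw [norm_sub_rev (vpi k) (v k)]; linarith
  -- recursion
  have hrec : ∀ k, 1 ≤ k → ‖vstar - vpi (k + 1)‖ ≤ γ * ‖vstar - vpi k‖ + 2 * γ * ε k := by
    intro k hk
    have h1 := hstep k hk
    have h2 := hvk k hk
    nlinarith [mul_le_mul_of_nonneg_left h2 hγ0.le]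
  -- epsilon growth
  have hγc_pos : (0:ℝ) < γ ^ c := Real.rpow_pos_of_pos hγ0 c
  have hεgrow : ∀ n : ℕ, ε (n + 1) ≤ (γ ^ c) ^ n * ε 1 := by
    intro n
    induction n with
    | zero => simp
    | succ n ih =>
      have h1 := hεdec (n + 1) (by omega)
      calc ε (n + 1 + 1) ≤ γ ^ c * ε (n + 1) := h1
        _ ≤ γ ^ c * ((γ ^ c) ^ n * ε 1) := mul_le_mul_of_nonneg_left ih hγc_pos.le
        _ = (γ ^ c) ^ (n + 1) * ε 1 := by ring
  -- q facts
  set q : ℝ := γ ^ (c - 1) with hqdef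
  have hq0 : 0 < q := Real.rpow_pos_of_pos hγ0 _
  have hq1 : q < 1 := Real.rpow_lt_one hγ0.le hγ1 (by linarith)
  have hγcq : γ ^ c = γ * q := by
    rw [hqdef, show c = 1 + (c - 1) by ring, Real.rpow_add hγ0, Real.rpow_one]
    ring_nf
  -- main induction
  have hmain : ∀ n : ℕ, ‖vstar - vpi (n + 2)‖ ≤
      γ ^ (n + 1) * ‖vstar - vpi 1‖ +
        2 * ε 1 * γ ^ (n + 1) * ∑ j ∈ Finset.range (n + 1), q ^ j := by
    intro n
    induction n with
    | zero =>
      have h := hrec 1 le_rfl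
      norm_num at h
      simp only [zero_add, pow_one, Finset.range_one, Finset.sum_singleton, pow_zero, mul_one]
      norm_num
      linarith
    | succ n ih =>
      have h1 := hrec (n + 2) (by omega)
      have h2 := hεgrow (n + 1)
      have h3 : (γ ^ c) ^ (n + 1) = γ ^ (n + 1) * q ^ (n + 1) := by
        rw [hγcq, mul_pow]
      have h4 : γ * ‖vstar - vpi (n + 2)‖ ≤
          γ * (γ ^ (n + 1) * ‖vstar - vpi 1‖ +
            2 * ε 1 * γ ^ (n + 1) * ∑ j ∈ Finset.range (n + 1), q ^ j) :=
        mul_le_mul_of_nonneg_left ih hγ0.le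
      have h5 : 2 * γ * ε (n + 2) ≤ 2 * γ * ((γ ^ c) ^ (n + 1) * ε 1) := by
        nlinarith
      have h6 : ∑ j ∈ Finset.range (n + 2), q ^ j =
          (∑ j ∈ Finset.range (n + 1), q ^ j) + q ^ (n + 1) := Finset.sum_range_succ _ _
      have h7 : γ * (γ ^ (n + 1) * ‖vstar - vpi 1‖ +
            2 * ε 1 * γ ^ (n + 1) * ∑ j ∈ Finset.range (n + 1), q ^ j) +
          2 * γ * ((γ ^ c) ^ (n + 1) * ε 1) =
          γ ^ (n + 2) * ‖vstar - vpi 1‖ +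
            2 * ε 1 * γ ^ (n + 2) * ∑ j ∈ Finset.range (n + 2), q ^ j := by
        rw [h3, h6]
        ring
      calc ‖vstar - vpi (n + 2 + 1)‖ ≤ γ * ‖vstar - vpi (n + 2)‖ + 2 * γ * ε (n + 2) := h1
        _ ≤ γ * (γ ^ (n + 1) * ‖vstar - vpi 1‖ +
              2 * ε 1 * γ ^ (n + 1) * ∑ j ∈ Finset.range (n + 1), q ^ j) +
            2 * γ * ((γ ^ c) ^ (n + 1) * ε 1) := by linarith
        _ = _ := h7
  -- conclude
  intro k hk
  obtain ⟨n, rfl⟩ : ∃ n, k = n + 1 := ⟨k - 1, by omega⟩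
  have h := hmain n
  have hgs : ∑ j ∈ Finset.range (n + 1), q ^ j ≤ 1 / (1 - q) := by
    have h1 := geom_sum_mul q (n + 1)
    have h2 : (0:ℝ) ≤ q ^ (n + 1) := pow_nonneg hq0.le _
    rw [le_div_iff₀ (by linarith)]
    nlinarith
  have hγk : (0:ℝ) < γ ^ (n + 1) := pow_pos hγ0 _
  have hε1 := hεpos 1 le_rfl
  have hfrac : 2 * ε 1 * (1 / (1 - q)) ≤ 2 * ε 1 / ((1 - q) * (1 - γ)) := by
    rw [mul_one_div]
    apply div_le_div_of_nonneg_left (by linarith) (by nlinarith) ?_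
    nlinarith
  have h8 : 2 * ε 1 * γ ^ (n + 1) * ∑ j ∈ Finset.range (n + 1), q ^ j ≤
      γ ^ (n + 1) * (2 * ε 1 / ((1 - q) * (1 - γ))) := by
    have h9 : 2 * ε 1 * γ ^ (n + 1) * ∑ j ∈ Finset.range (n + 1), q ^ j ≤
        2 * ε 1 * γ ^ (n + 1) * (1 / (1 - q)) := by
      apply mul_le_mul_of_nonneg_left hgs (by positivity)
    calc 2 * ε 1 * γ ^ (n + 1) * ∑ j ∈ Finset.range (n + 1), q ^ j ≤
        2 * ε 1 * γ ^ (n + 1) * (1 / (1 - q)) := h9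
      _ = γ ^ (n + 1) * (2 * ε 1 * (1 / (1 - q))) := by ring
      _ ≤ γ ^ (n + 1) * (2 * ε 1 / ((1 - q) * (1 - γ))) :=
          mul_le_mul_of_nonneg_left hfrac hγk.le
  calc ‖vstar - vpi (n + 1 + 1)‖ ≤
      γ ^ (n + 1) * ‖vstar - vpi 1‖ +
        2 * ε 1 * γ ^ (n + 1) * ∑ j ∈ Finset.range (n + 1), q ^ j := h
    _ ≤ γ ^ (n + 1) * ‖vstar - vpi 1‖ + γ ^ (n + 1) * (2 * ε 1 / ((1 - q) * (1 - γ))) := by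
        linarith
    _ = γ ^ (n + 1) * (‖vstar - vpi 1‖ + 2 * ε 1 / ((1 - q) * (1 - γ))) := by ring
end

section
/- (One-step contraction of the optimality gap under approximate evaluation.) Let ε ≥ 0, let v ∈ ℝ^S, let π be a policy with ‖L_π v − v‖∞ ≤ (1−γ) ε, and let π' be a policy greedy for v, i.e. L_{π'} v = L v. Then ‖v* − v_{π'}‖∞ ≤ γ ‖v* − v_π‖∞ + 2γε/(1−γ), where v_π, v_{π'} are the unique fixed points of L_π, L_{π'} and v* is the unique fixed point of L. -/
private lemma csInf_le_csInf_add' {X : Type*} {K : Set X} (hK : K.Nonempty)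
    {f g : X → ℝ} (hbdd : BddBelow (f '' K)) {c : ℝ}
    (h : ∀ x ∈ K, f x ≤ g x + c) :
    sInf (f '' K) ≤ sInf (g '' K) + c := by
  have h1 : sInf (f '' K) - c ≤ sInf (g '' K) := by
    apply le_csInf (hK.image g)
    rintro y ⟨x, hx, rfl⟩
    have h2 := csInf_le hbdd (Set.mem_image_of_mem f hx)
    linarith [h x hx]
  linarith

private lemma csSup_le_csSup_add' {X : Type*} {K : Set X} (hK : K.Nonempty)
    {f g : X → ℝ} (hbdd : BddAbove (g '' K)) {c : ℝ}
    (h : ∀ x ∈ K, f x ≤ g x + c) :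
    sSup (f '' K) ≤ sSup (g '' K) + c := by
  apply csSup_le (hK.image f)
  rintro y ⟨x, hx, rfl⟩
  have h2 := le_csSup hbdd (Set.mem_image_of_mem g hx)
  linarith [h x hx]

/-- Weighted sums over simplices respect `u ≤ w + c` shifts, picking up a factor `γ`. -/
private lemma sum_bound {S A : Type*} [Fintype S] [Fintype A]
    {γ : ℝ} (hγ0 : 0 < γ) (r : S → A → S → ℝ)
    {d : A → ℝ} (hd : d ∈ stdSimplex ℝ A)
    {p : A → S → ℝ} (hp : ∀ a, p a ∈ stdSimplex ℝ S)
    {u w : S → ℝ} {c : ℝ} (hc : ∀ s', u s' ≤ w s' + c) (s : S) :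
    ∑ a, d a * ∑ s', p a s' * (r s a s' + γ * u s')
      ≤ (∑ a, d a * ∑ s', p a s' * (r s a s' + γ * w s')) + γ * c := by
  have hinner : ∀ a, ∑ s', p a s' * (r s a s' + γ * u s')
      ≤ (∑ s', p a s' * (r s a s' + γ * w s')) + γ * c := by
    intro a
    have h1 : ∑ s', p a s' * (r s a s' + γ * u s')
        ≤ ∑ s', (p a s' * (r s a s' + γ * w s') + p a s' * (γ * c)) := by
      apply Finset.sum_le_sum
      intro s' _
      have h0 := (hp a).1 s'
      have h3 : (p a s' * γ) * u s' ≤ (p a s' * γ) * (w s' + c) :=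
        mul_le_mul_of_nonneg_left (hc s') (mul_nonneg h0 hγ0.le)
      nlinarith [h3]
    have h2 : ∑ s', (p a s' * (r s a s' + γ * w s') + p a s' * (γ * c))
        = (∑ s', p a s' * (r s a s' + γ * w s')) + γ * c := by
      rw [Finset.sum_add_distrib, ← Finset.sum_mul, (hp a).2, one_mul]
    linarith
  have h1 : ∑ a, d a * ∑ s', p a s' * (r s a s' + γ * u s')
      ≤ ∑ a, (d a * ∑ s', p a s' * (r s a s' + γ * w s') + d a * (γ * c)) := by
    apply Finset.sum_le_sum
    intro a _
    have h0 := hd.1 a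
    nlinarith [hinner a]
  have h2 : ∑ a, (d a * ∑ s', p a s' * (r s a s' + γ * w s') + d a * (γ * c))
      = (∑ a, d a * ∑ s', p a s' * (r s a s' + γ * w s')) + γ * c := by
    rw [Finset.sum_add_distrib, ← Finset.sum_mul, hd.2, one_mul]
  linarith

/-- One-step contraction of the optimality gap under approximate
evaluation: `‖vstar − vpi'‖∞ ≤ γ‖vstar − vpi‖∞ + 2γε/(1−γ)`. -/
theorem one_step_optimality_gap_contraction
    {S A : Type*} [Fintype S] [Nonempty S] [Fintype A] [Nonempty A]
    (γ : ℝ) (hγ0 : 0 < γ) (hγ1 : γ < 1)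
    (r : S → A → S → ℝ)
    (P : S → Set (A → S → ℝ))
    (hPne : ∀ s, (P s).Nonempty)
    (hPcompact : ∀ s, IsCompact (P s))
    (hPsub : ∀ s, ∀ p ∈ P s, ∀ a, p a ∈ stdSimplex ℝ S)
    (Lpol : (S → A → ℝ) → (S → ℝ) → (S → ℝ))
    (hLpol : ∀ (π : S → A → ℝ) (v : S → ℝ) (s : S), Lpol π v s =
      sInf ((fun p : A → S → ℝ =>
        ∑ a, π s a * ∑ s', p a s' * (r s a s' + γ * v s')) '' P s))
    (L : (S → ℝ) → (S → ℝ))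
    (hL : ∀ v s, L v s =
      sSup ((fun d : A → ℝ =>
        sInf ((fun p : A → S → ℝ =>
          ∑ a, d a * ∑ s', p a s' * (r s a s' + γ * v s')) '' P s)) '' stdSimplex ℝ A))
    (ε : ℝ) (hε : 0 ≤ ε)
    (v : S → ℝ)
    (π π' : S → A → ℝ)
    (hπ : ∀ s, π s ∈ stdSimplex ℝ A) (hπ' : ∀ s, π' s ∈ stdSimplex ℝ A)
    (heval : ‖Lpol π v - v‖ ≤ (1 - γ) * ε)
    (hgreedy : Lpol π' v = L v)
    (vpi vpi' : S → ℝ)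
    (hvpi : Lpol π (vpi) = vpi) (hvpi' : Lpol π' (vpi') = vpi')
    (vstar : S → ℝ) (hvstar : L vstar = vstar) :
    ‖vstar - vpi'‖ ≤ γ * ‖vstar - vpi‖ + 2 * γ * ε / (1 - γ) := by
  classical
  -- inner value function
  set g : (A → ℝ) → (S → ℝ) → S → (A → S → ℝ) → ℝ :=
    fun d u s p => ∑ a, d a * ∑ s', p a s' * (r s a s' + γ * u s') with hg
  have hgcont : ∀ (d : A → ℝ) (u : S → ℝ) (s : S), Continuous (g d u s) := by
    intro d u s; simp only [hg]; fun_prop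
  have hbddB : ∀ (d : A → ℝ) (u : S → ℝ) (s : S), BddBelow ((g d u s) '' P s) :=
    fun d u s => ((hPcompact s).image (hgcont d u s)).bddBelow
  -- the inner sInf function over policies
  set h : (S → ℝ) → S → (A → ℝ) → ℝ := fun u s d => sInf ((g d u s) '' P s) with hh
  -- bddAbove of h-image over stdSimplex
  have hbddA : ∀ (u : S → ℝ) (s : S), BddAbove ((h u s) '' stdSimplex ℝ A) := by
    intro u s
    obtain ⟨p₀, hp₀⟩ := hPne s
    set C : ℝ := Finset.univ.sup' Finset.univ_nonempty
      (fun a => ∑ s', p₀ a s' * (r s a s' + γ * u s')) with hC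
    refine ⟨C, ?_⟩
    rintro y ⟨d, hd, rfl⟩
    have h1 : h u s d ≤ g d u s p₀ := csInf_le (hbddB d u s) (Set.mem_image_of_mem _ hp₀)
    have h2 : g d u s p₀ ≤ C := by
      have hb : ∀ a ∈ Finset.univ, d a * (∑ s', p₀ a s' * (r s a s' + γ * u s')) ≤ d a * C := by
        intro a _
        exact mul_le_mul_of_nonneg_left
          (Finset.le_sup' (fun a => ∑ s', p₀ a s' * (r s a s' + γ * u s')) (Finset.mem_univ a))
          (hd.1 a)
      calc g d u s p₀ ≤ ∑ a, d a * C := Finset.sum_le_sum hb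
        _ = C := by rw [← Finset.sum_mul, hd.2, one_mul]
    linarith
  -- rewrite operators
  have hLpol' : ∀ (τ : S → A → ℝ) (u : S → ℝ) (s : S), Lpol τ u s = h u s (τ s) := by
    intro τ u s; rw [hLpol]
  have hL' : ∀ (u : S → ℝ) (s : S), L u s = sSup ((h u s) '' stdSimplex ℝ A) := by
    intro u s; rw [hL]
  -- master one-sided comparison for Lpol
  have masterP : ∀ (τ : S → A → ℝ), (∀ s, τ s ∈ stdSimplex ℝ A) →
      ∀ (u w : S → ℝ) (c : ℝ), (∀ s', u s' ≤ w s' + c) →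
      ∀ s, Lpol τ u s ≤ Lpol τ w s + γ * c := by
    intro τ hτ u w c hc s
    rw [hLpol' τ u s, hLpol' τ w s]
    exact csInf_le_csInf_add' (hPne s) (hbddB _ u s)
      (fun p hp => sum_bound hγ0 r (hτ s) (hPsub s p hp) hc s)
  -- master one-sided comparison for L
  have masterL : ∀ (u w : S → ℝ) (c : ℝ), (∀ s', u s' ≤ w s' + c) →
      ∀ s, L u s ≤ L w s + γ * c := by
    intro u w c hc s
    rw [hL' u s, hL' w s]
    refine csSup_le_csSup_add' ⟨_, single_mem_stdSimplex ℝ (Classical.arbitrary A)⟩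
      (hbddA w s) ?_
    intro d hd
    exact csInf_le_csInf_add' (hPne s) (hbddB d u s)
      (fun p hp => sum_bound hγ0 r hd (hPsub s p hp) hc s)
  -- Lpol ≤ L pointwise
  have hPleL : ∀ (τ : S → A → ℝ), (∀ s, τ s ∈ stdSimplex ℝ A) →
      ∀ (u : S → ℝ) (s : S), Lpol τ u s ≤ L u s := by
    intro τ hτ u s
    rw [hLpol' τ u s, hL' u s]
    exact le_csSup (hbddA u s) (Set.mem_image_of_mem _ (hτ s))
  -- pointwise bounds from norms
  have hle_norm : ∀ (u w : S → ℝ) (s' : S), u s' ≤ w s' + ‖u - w‖ := by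
    intro u w s'
    have h1 := norm_le_pi_norm (u - w) s'
    rw [Real.norm_eq_abs] at h1
    simp only [Pi.sub_apply] at h1
    cases abs_le.1 h1 with
    | intro l r' => linarith
  -- step 1: ‖v - vpi‖ ≤ ε
  have hvvpi : ‖v - vpi‖ ≤ ε := by
    have h1 : ∀ s, |v s - vpi s| ≤ (1 - γ) * ε + γ * ‖v - vpi‖ := by
      intro s
      have e1 : Lpol π v s ≤ Lpol π vpi s + γ * ‖v - vpi‖ :=
        masterP π hπ v vpi _ (hle_norm v vpi) s
      have e2 : Lpol π vpi s ≤ Lpol π v s + γ * ‖vpi - v‖ :=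
        masterP π hπ vpi v _ (hle_norm vpi v) s
      have e3 : ‖vpi - v‖ = ‖v - vpi‖ := by rw [← neg_sub, norm_neg]
      have e4 : |Lpol π v s - v s| ≤ (1 - γ) * ε := by
        have hp1 := norm_le_pi_norm (Lpol π v - v) s
        rw [Real.norm_eq_abs] at hp1
        simp only [Pi.sub_apply] at hp1
        linarith
      have e5 := congrFun hvpi s
      rw [e3] at e2
      cases abs_le.1 e4 with
      | intro l r' =>
        rw [abs_le]
        constructor <;> nlinarith
    have h2 : ‖v - vpi‖ ≤ (1 - γ) * ε + γ * ‖v - vpi‖ := by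
      refine (pi_norm_le_iff_of_nonempty _).2 fun s => ?_
      rw [Real.norm_eq_abs]
      simpa using h1 s
    nlinarith
  -- step 2: vpi' ≤ vstar pointwise (via max of vpi' - vstar)
  have hM0 : ∀ s, vpi' s ≤ vstar s := by
    set M := Finset.univ.sup' Finset.univ_nonempty (fun s => vpi' s - vstar s) with hMdef
    have hMle : ∀ s', vpi' s' ≤ vstar s' + M := by
      intro s'
      have := Finset.le_sup' (fun s => vpi' s - vstar s) (Finset.mem_univ s')
      rw [← hMdef] at this
      linarith
    have hstep : ∀ s, vpi' s - vstar s ≤ γ * M := by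
      intro s
      have e1 : Lpol π' vpi' s ≤ L vpi' s := hPleL π' hπ' vpi' s
      have e2 : L vpi' s ≤ L vstar s + γ * M := masterL vpi' vstar M hMle s
      have e3 := congrFun hvpi' s
      have e4 := congrFun hvstar s
      linarith
    have hMγ : M ≤ γ * M :=
      Finset.sup'_le Finset.univ_nonempty (fun s => vpi' s - vstar s) (fun s _ => hstep s)
    intro s
    have h1 := hMle s
    nlinarith [Finset.le_sup' (fun s => vpi' s - vstar s) (Finset.mem_univ s), hMγ]
  -- step 3: v - vpi' ≤ ε pointwise (via max of v - vpi')
  have hM' : ∀ s, v s - vpi' s ≤ ε := by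
    set M' := Finset.univ.sup' Finset.univ_nonempty (fun s => v s - vpi' s) with hM'def
    have hM'le : ∀ s', v s' ≤ vpi' s' + M' := by
      intro s'
      have := Finset.le_sup' (fun s => v s - vpi' s) (Finset.mem_univ s')
      rw [← hM'def] at this
      linarith
    have hstep : ∀ s, v s - vpi' s ≤ (1 - γ) * ε + γ * M' := by
      intro s
      have e1 : |Lpol π v s - v s| ≤ (1 - γ) * ε := by
        have hp1 := norm_le_pi_norm (Lpol π v - v) s
        rw [Real.norm_eq_abs] at hp1
        simp only [Pi.sub_apply] at hp1
        linarith
      have e2 : Lpol π v s ≤ L v s := hPleL π hπ v s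
      have e3 : L v s = Lpol π' v s := (congrFun hgreedy s).symm
      have e4 : Lpol π' v s ≤ Lpol π' vpi' s + γ * M' :=
        masterP π' hπ' v vpi' M' hM'le s
      have e5 := congrFun hvpi' s
      cases abs_le.1 e1 with
      | intro l r' => linarith
    have hM'γ : M' ≤ (1 - γ) * ε + γ * M' :=
      Finset.sup'_le Finset.univ_nonempty (fun s => v s - vpi' s) (fun s _ => hstep s)
    intro s
    have h1 := Finset.le_sup' (fun s => v s - vpi' s) (Finset.mem_univ s)
    have h2 : M' ≤ ε := by nlinarith
    rw [← hM'def] at h1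
    linarith
  -- step 4: ‖vstar - v‖ ≤ ‖vstar - vpi‖ + ε
  have hsv : ‖vstar - v‖ ≤ ‖vstar - vpi‖ + ε := by
    have h1 : vstar - v = (vstar - vpi) + (vpi - v) := by abel
    have h2 : ‖vpi - v‖ = ‖v - vpi‖ := by rw [← neg_sub, norm_neg]
    calc ‖vstar - v‖ = ‖(vstar - vpi) + (vpi - v)‖ := by rw [← h1]
      _ ≤ ‖vstar - vpi‖ + ‖vpi - v‖ := norm_add_le _ _
      _ ≤ ‖vstar - vpi‖ + ε := by rw [h2]; linarith
  -- step 5: final pointwise bound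
  have hfinal : ∀ s, |vstar s - vpi' s| ≤ γ * ‖vstar - vpi‖ + 2 * γ * ε := by
    intro s
    have e1 : L vstar s ≤ L v s + γ * ‖vstar - v‖ :=
      masterL vstar v _ (hle_norm vstar v) s
    have e2 : L v s = Lpol π' v s := (congrFun hgreedy s).symm
    have hM'le : ∀ s', v s' ≤ vpi' s' + ε := fun s' => by linarith [hM' s']
    have e3 : Lpol π' v s ≤ Lpol π' vpi' s + γ * ε :=
      masterP π' hπ' v vpi' ε hM'le s
    have e4 := congrFun hvpi' s
    have e5 := congrFun hvstar s
    have upper : vstar s - vpi' s ≤ γ * ‖vstar - vpi‖ + 2 * γ * ε := by nlinarith [hsv]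
    have lower : 0 ≤ vstar s - vpi' s := by linarith [hM0 s]
    have hnn : 0 ≤ γ * ‖vstar - vpi‖ + 2 * γ * ε := by positivity
    rw [abs_le]
    exact ⟨by linarith, upper⟩
  have hnorm : ‖vstar - vpi'‖ ≤ γ * ‖vstar - vpi‖ + 2 * γ * ε := by
    refine (pi_norm_le_iff_of_nonempty _).2 fun s => ?_
    rw [Real.norm_eq_abs]
    simpa using hfinal s
  have hdiv : 2 * γ * ε ≤ 2 * γ * ε / (1 - γ) := by
    rw [le_div_iff₀ (by linarith)]
    nlinarith [mul_nonneg (mul_nonneg hγ0.le hγ0.le) hε]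
  linarith
end

section
/- (Equivalence of the s-rectangular max-min problem and its inverse formulation.) The optimal value of max_{d ∈ Δ^A} min{ Σ_{a ∈ A} d_a · q_a(ξ_a) : ξ ∈ ℝ^A, ξ ≥ 0, Σ_{a ∈ A} ξ_a ≤ κ } equals the optimal value of min{ u ∈ ℝ : Σ_{a ∈ A} q_a^{-1}(u) ≤ κ }. -/
/-!
Both `q_a` and `q_a⁻¹` are values `constrainedInf P f g t = min {f p | p ∈ P, g p ≤ t}` of convex
programs over the compact simplex, with the roles of the objective `z_a ⋅ p` and the distance
`‖p - p̄_a‖_{1,w_a}` swapped; hence `q_a` is convex and the two are inverse in the sense that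
`q_a (q_a⁻¹ u) ≤ u` and `q_a ξ ≤ u → q_a⁻¹ u ≤ ξ`.

Let `T` be the feasible set of the inverse problem. For `u ∈ T` the budget `ξ_a = q_a⁻¹ u` is
admissible and gives `∑ d_a q_a(ξ_a) ≤ u` for every `d ∈ Δ^A`, so the max-min is at most `inf T`.
Conversely, for every admissible `ξ` the value `max_a q_a(ξ_a)` lies in `T`, so the convex set
`{y | ∃ ξ admissible, q(ξ) ≤ y}` misses the open orthant below `inf T`. A separating hyperplane
has a nonnegative normal, and normalizing it gives a `d ∈ Δ^A` whose inner minimum is `≥ inf T`.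
-/

noncomputable def constrainedInf {E : Type*} (P : Set E) (f g : E → ℝ) (t : ℝ) : ℝ :=
  sInf (f '' {p | p ∈ P ∧ g p ≤ t})

section ConstrainedInf

variable {E : Type*} {P : Set E} {f g : E → ℝ} {t u : ℝ}

theorem constrainedInf_le (hf : BddBelow (f '' P)) {p : E} (hp : p ∈ P) (hpt : g p ≤ t) :
    constrainedInf P f g t ≤ f p :=
  csInf_le (hf.mono (Set.image_mono fun _ hx => hx.1)) ⟨p, ⟨hp, hpt⟩, rfl⟩

theorem le_constrainedInf {m : ℝ} (hfeas : ∃ p ∈ P, g p ≤ t) (hm : ∀ p ∈ P, m ≤ f p) :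
    m ≤ constrainedInf P f g t := by
  obtain ⟨p, hp, hpt⟩ := hfeas
  refine le_csInf ⟨f p, p, ⟨hp, hpt⟩, rfl⟩ ?_
  rintro _ ⟨p, ⟨hp, -⟩, rfl⟩
  exact hm p hp

variable [TopologicalSpace E]

theorem exists_eq_constrainedInf (hP : IsCompact P) (hf : Continuous f) (hg : Continuous g)
    (hfeas : ∃ p ∈ P, g p ≤ t) : ∃ p ∈ P, g p ≤ t ∧ f p = constrainedInf P f g t := by
  obtain ⟨p₀, hp₀, hp₀t⟩ := hfeas
  have hK : IsCompact {p | p ∈ P ∧ g p ≤ t} := hP.inter_right (isClosed_le hg continuous_const)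
  obtain ⟨p, ⟨hp, hpt⟩, hfp⟩ := (hK.image hf).sInf_mem ⟨f p₀, p₀, ⟨hp₀, hp₀t⟩, rfl⟩
  exact ⟨p, hp, hpt, hfp⟩

theorem exists_le_of_constrainedInf_le (hP : IsCompact P) (hf : Continuous f) (hg : Continuous g)
    (hfeas : ∃ p ∈ P, g p ≤ t) (hu : constrainedInf P f g t ≤ u) :
    ∃ p ∈ P, g p ≤ t ∧ f p ≤ u := by
  obtain ⟨p, hp, hpt, hfp⟩ := exists_eq_constrainedInf hP hf hg hfeas
  exact ⟨p, hp, hpt, hfp.trans_le hu⟩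

theorem constrainedInf_swap_le (hP : IsCompact P) (hf : Continuous f) (hg : Continuous g)
    (hfeas : ∃ p ∈ P, g p ≤ t) (hu : constrainedInf P f g t ≤ u) :
    constrainedInf P g f u ≤ t := by
  obtain ⟨p, hp, hpt, hpu⟩ := exists_le_of_constrainedInf_le hP hf hg hfeas hu
  exact (constrainedInf_le (hP.image hg).bddBelow hp hpu).trans hpt

theorem convexOn_constrainedInf [AddCommGroup E] [Module ℝ E] (hP : IsCompact P)
    (hPc : Convex ℝ P) (hf : Continuous f) (hg : Continuous g) (hfc : ConvexOn ℝ P f)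
    (hgc : ConvexOn ℝ P g) : ConvexOn ℝ {t | ∃ p ∈ P, g p ≤ t} (constrainedInf P f g) := by
  have hcomb : ∀ ⦃t₁ t₂ : ℝ⦄ ⦃p₁ p₂ : E⦄ ⦃a b : ℝ⦄, p₁ ∈ P → p₂ ∈ P → g p₁ ≤ t₁ → g p₂ ≤ t₂ →
      0 ≤ a → 0 ≤ b → a + b = 1 →
      a • p₁ + b • p₂ ∈ P ∧ g (a • p₁ + b • p₂) ≤ a * t₁ + b * t₂ :=
    fun t₁ t₂ p₁ p₂ a b hp₁ hp₂ ht₁ ht₂ ha hb hab =>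
      ⟨hPc hp₁ hp₂ ha hb hab, (hgc.2 hp₁ hp₂ ha hb hab).trans <|
        add_le_add (mul_le_mul_of_nonneg_left ht₁ ha) (mul_le_mul_of_nonneg_left ht₂ hb)⟩
  refine ⟨?_, fun t₁ ht₁ t₂ ht₂ a b ha hb hab => ?_⟩
  · rintro t₁ ⟨p₁, hp₁, ht₁⟩ t₂ ⟨p₂, hp₂, ht₂⟩ a b ha hb hab
    exact ⟨_, hcomb hp₁ hp₂ ht₁ ht₂ ha hb hab⟩
  obtain ⟨p₁, hp₁, ht₁, hfp₁⟩ := exists_eq_constrainedInf hP hf hg ht₁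
  obtain ⟨p₂, hp₂, ht₂, hfp₂⟩ := exists_eq_constrainedInf hP hf hg ht₂
  obtain ⟨hp, hpt⟩ := hcomb hp₁ hp₂ ht₁ ht₂ ha hb hab
  calc constrainedInf P f g (a • t₁ + b • t₂) ≤ f (a • p₁ + b • p₂) :=
        constrainedInf_le (hP.image hf).bddBelow hp hpt
    _ ≤ a • f p₁ + b • f p₂ := hfc.2 hp₁ hp₂ ha hb hab
    _ = _ := by rw [hfp₁, hfp₂]

end ConstrainedInf

theorem nonneg_of_forall_sum_mul_lt {ι : Type*} [Fintype ι] {v : ι → ℝ} {u c : ℝ}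
    (h : ∀ b : ι → ℝ, (∀ i, b i < u) → ∑ i, b i * v i < c) (i : ι) : 0 ≤ v i := by
  classical
  by_contra! hv
  -- lowering `b = u - 1` far enough along coordinate `i` pushes `∑ b v` above `c`
  set a := ∑ j, (u - 1) * v j
  set t := |c - a| / -v i
  have ht : 0 ≤ t := div_nonneg (abs_nonneg _) (by linarith)
  have htv : t * -v i = |c - a| := div_mul_cancel₀ _ (neg_ne_zero.2 hv.ne)
  have hsum : ∑ j, (u - 1 - if j = i then t else 0) * v j = a - t * v i := by
    simp [a, sub_mul, Finset.sum_sub_distrib]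
  have hlt := h (fun j => u - 1 - if j = i then t else 0) fun j => by split_ifs <;> linarith
  rw [hsum] at hlt
  linarith [le_abs_self (c - a), mul_neg t (v i)]

theorem exists_mem_stdSimplex_le_sum_mul {ι : Type*} [Fintype ι] {C : Set (ι → ℝ)}
    (hC : Convex ℝ C) (hCne : C.Nonempty) {u : ℝ} (hu : ∀ y ∈ C, ∃ i, u ≤ y i) :
    ∃ d ∈ stdSimplex ℝ ι, ∀ y ∈ C, u ≤ ∑ i, d i * y i := by
  classical
  set B : Set (ι → ℝ) := Set.univ.pi fun _ => Set.Iio u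
  have hBo : IsOpen B := isOpen_set_pi Set.finite_univ fun _ _ => isOpen_Iio
  have hBc : Convex ℝ B := convex_pi fun _ _ => convex_Iio u
  have hdisj : Disjoint B C := Set.disjoint_left.2 fun y hyB hyC => by
    obtain ⟨i, hi⟩ := hu y hyC
    exact (hyB i (Set.mem_univ i)).not_ge hi
  obtain ⟨f, c, hfB, hfC⟩ := geometric_hahn_banach_open hBc hBo hC hdisj
  set v : ι → ℝ := fun i => f fun j => if i = j then 1 else 0
  have hf : ∀ y, f y = ∑ i, y i * v i := fun y => f.toLinearMap.pi_apply_eq_sum_univ y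
  have hvB : ∀ b : ι → ℝ, (∀ i, b i < u) → ∑ i, b i * v i < c := fun b hb =>
    hf b ▸ hfB b fun i _ => hb i
  have hv : ∀ i, 0 ≤ v i := nonneg_of_forall_sum_mul_lt hvB
  set W := ∑ i, v i
  have hW : 0 < W := by
    refine (Finset.sum_nonneg fun i _ => hv i).lt_of_ne fun hW0 => ?_
    have hv0 := (Finset.sum_eq_zero_iff_of_nonneg fun i _ => hv i).1 hW0.symm
    obtain ⟨y, hy⟩ := hCne
    have hB := hvB (fun _ => u - 1) fun _ => by linarith
    have hC := hf y ▸ hfC y hy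
    simp only [hv0 _ (Finset.mem_univ _), mul_zero, Finset.sum_const_zero] at hB hC
    linarith
  refine ⟨fun i => v i / W, ⟨fun i => div_nonneg (hv i) hW.le, ?_⟩, fun y hy => ?_⟩
  · rw [← Finset.sum_div, div_self hW.ne']
  -- the constant vector with entries `s = ∑ d y < u` lies in `B` but has the same `f`-value as `y`
  by_contra! hlt
  set s := ∑ i, v i / W * y i
  have hfs : s * W = ∑ i, y i * v i := by
    simp only [s, Finset.sum_mul]
    exact Finset.sum_congr rfl fun i _ => by field_simp
  have hB : s * W < c := by
    rw [Finset.mul_sum]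
    exact hvB (fun _ => s) fun _ => hlt
  have hC := hf y ▸ hfC y hy
  linarith

theorem convex_setOf_exists_forall_le {ι E : Type*} [AddCommMonoid E] [SMul ℝ E] {K : Set E}
    (hK : Convex ℝ K) {φ : ι → E → ℝ} (hφ : ∀ i, ConvexOn ℝ K (φ i)) :
    Convex ℝ {y : ι → ℝ | ∃ x ∈ K, ∀ i, φ i x ≤ y i} := by
  rintro y₁ ⟨x₁, hx₁, hy₁⟩ y₂ ⟨x₂, hx₂, hy₂⟩ a b ha hb hab
  refine ⟨a • x₁ + b • x₂, hK hx₁ hx₂ ha hb hab, fun i => ?_⟩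
  calc φ i (a • x₁ + b • x₂) ≤ a * φ i x₁ + b * φ i x₂ := (hφ i).2 hx₁ hx₂ ha hb hab
    _ ≤ a * y₁ i + b * y₂ i := by gcongr; exacts [hy₁ i, hy₂ i]

section MaxMin

variable {A : Type*} [Fintype A]

def budgetSet (A : Type*) [Fintype A] (κ : ℝ) : Set (A → ℝ) :=
  {ξ | (∀ a, 0 ≤ ξ a) ∧ ∑ a, ξ a ≤ κ}

theorem zero_mem_budgetSet {κ : ℝ} (hκ : 0 ≤ κ) : (0 : A → ℝ) ∈ budgetSet A κ :=
  ⟨fun _ => le_rfl, by simpa using hκ⟩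

theorem convex_budgetSet (κ : ℝ) : Convex ℝ (budgetSet A κ) := by
  rintro ξ ⟨hξ, hξκ⟩ η ⟨hη, hηκ⟩ a b ha hb hab
  refine ⟨fun i => add_nonneg (mul_nonneg ha (hξ i)) (mul_nonneg hb (hη i)), ?_⟩
  simp only [Pi.add_apply, Pi.smul_apply, smul_eq_mul, Finset.sum_add_distrib, ← Finset.mul_sum]
  calc a * ∑ i, ξ i + b * ∑ i, η i ≤ a * κ + b * κ := by gcongr
    _ = κ := by rw [← add_mul, hab, one_mul]

noncomputable def budgetedMin (q : A → ℝ → ℝ) (κ : ℝ) (d : A → ℝ) : ℝ :=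
  sInf ((fun ξ : A → ℝ => ∑ a, d a * q a (ξ a)) '' budgetSet A κ)

def inverseFeasible (D : A → Set ℝ) (qinv : A → ℝ → ℝ) (κ : ℝ) : Set ℝ :=
  {u | (∀ a, u ∈ D a) ∧ ∑ a, qinv a u ≤ κ}

variable {q qinv : A → ℝ → ℝ} {D : A → Set ℝ} {κ : ℝ}

theorem exists_mem_inverseFeasible [Nonempty A]
    (hq : ∀ a ξ u, 0 ≤ ξ → q a ξ ≤ u → u ∈ D a ∧ qinv a u ≤ ξ)
    {ξ : A → ℝ} (hξ : ξ ∈ budgetSet A κ) :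
    ∃ a₀, q a₀ (ξ a₀) ∈ inverseFeasible D qinv κ := by
  obtain ⟨a₀, -, hmax⟩ := Finset.exists_max_image Finset.univ (fun a => q a (ξ a))
    Finset.univ_nonempty
  have hle : ∀ a, q a (ξ a) ≤ q a₀ (ξ a₀) := fun a => hmax a (Finset.mem_univ a)
  refine ⟨a₀, fun a => (hq a _ _ (hξ.1 a) (hle a)).1, ?_⟩
  exact (Finset.sum_le_sum fun a _ => (hq a _ _ (hξ.1 a) (hle a)).2).trans hξ.2

theorem bddBelow_inverseFeasible [Nonempty A] (hq_bdd : ∀ a, BddBelow (q a '' Set.Ici 0))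
    (hqinv : ∀ a u, u ∈ D a → 0 ≤ qinv a u ∧ q a (qinv a u) ≤ u) :
    BddBelow (inverseFeasible D qinv κ) := by
  let a₀ := Classical.arbitrary A
  obtain ⟨m, hm⟩ := hq_bdd a₀
  refine ⟨m, fun u hu => ?_⟩
  obtain ⟨hnonneg, hle⟩ := hqinv a₀ u (hu.1 a₀)
  exact (hm ⟨_, hnonneg, rfl⟩).trans hle

theorem budgetedMin_le (hq_bdd : ∀ a, BddBelow (q a '' Set.Ici 0))
    (hqinv : ∀ a u, u ∈ D a → 0 ≤ qinv a u ∧ q a (qinv a u) ≤ u)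
    {d : A → ℝ} (hd : d ∈ stdSimplex ℝ A) {u : ℝ} (hu : u ∈ inverseFeasible D qinv κ) :
    budgetedMin q κ d ≤ u := by
  choose m hm using hq_bdd
  have hbdd : BddBelow ((fun ξ : A → ℝ => ∑ a, d a * q a (ξ a)) '' budgetSet A κ) := by
    refine ⟨∑ a, d a * m a, ?_⟩
    rintro _ ⟨ξ, hξ, rfl⟩
    exact Finset.sum_le_sum fun a _ => mul_le_mul_of_nonneg_left (hm a ⟨_, hξ.1 a, rfl⟩) (hd.1 a)
  have hmem : (fun a => qinv a u) ∈ budgetSet A κ := ⟨fun a => (hqinv a u (hu.1 a)).1, hu.2⟩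
  calc budgetedMin q κ d ≤ ∑ a, d a * q a (qinv a u) := csInf_le hbdd ⟨_, hmem, rfl⟩
    _ ≤ ∑ a, d a * u :=
      Finset.sum_le_sum fun a _ => mul_le_mul_of_nonneg_left (hqinv a u (hu.1 a)).2 (hd.1 a)
    _ = u := by rw [← Finset.sum_mul, hd.2, one_mul]

theorem exists_sInf_inverseFeasible_le_budgetedMin [Nonempty A] (hκ : 0 ≤ κ)
    (hq_convex : ∀ a, ConvexOn ℝ (Set.Ici 0) (q a)) (hq_bdd : ∀ a, BddBelow (q a '' Set.Ici 0))
    (hqinv : ∀ a u, u ∈ D a → 0 ≤ qinv a u ∧ q a (qinv a u) ≤ u)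
    (hq : ∀ a ξ u, 0 ≤ ξ → q a ξ ≤ u → u ∈ D a ∧ qinv a u ≤ ξ) :
    ∃ d ∈ stdSimplex ℝ A, sInf (inverseFeasible D qinv κ) ≤ budgetedMin q κ d := by
  set C := {y : A → ℝ | ∃ ξ ∈ budgetSet A κ, ∀ a, q a (ξ a) ≤ y a}
  have hC : Convex ℝ C := convex_setOf_exists_forall_le (convex_budgetSet κ) fun a =>
    ((hq_convex a).comp_linearMap (LinearMap.proj a)).subset (fun ξ hξ => hξ.1 a)
      (convex_budgetSet κ)
  have hCne : C.Nonempty := ⟨_, 0, zero_mem_budgetSet hκ, fun _ => le_rfl⟩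
  have hCu : ∀ y ∈ C, ∃ a, sInf (inverseFeasible D qinv κ) ≤ y a := by
    rintro y ⟨ξ, hξ, hy⟩
    obtain ⟨a₀, hmem⟩ := exists_mem_inverseFeasible hq hξ
    exact ⟨a₀, (csInf_le (bddBelow_inverseFeasible hq_bdd hqinv) hmem).trans (hy a₀)⟩
  obtain ⟨d, hd, hdC⟩ := exists_mem_stdSimplex_le_sum_mul hC hCne hCu
  refine ⟨d, hd, le_csInf ⟨_, 0, zero_mem_budgetSet hκ, rfl⟩ ?_⟩
  rintro _ ⟨ξ, hξ, rfl⟩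
  exact hdC _ ⟨ξ, hξ, fun _ => le_rfl⟩

theorem sSup_budgetedMin_eq_sInf_inverseFeasible [Nonempty A] (hκ : 0 ≤ κ)
    (hq_convex : ∀ a, ConvexOn ℝ (Set.Ici 0) (q a)) (hq_bdd : ∀ a, BddBelow (q a '' Set.Ici 0))
    (hqinv : ∀ a u, u ∈ D a → 0 ≤ qinv a u ∧ q a (qinv a u) ≤ u)
    (hq : ∀ a ξ u, 0 ≤ ξ → q a ξ ≤ u → u ∈ D a ∧ qinv a u ≤ ξ) :
    sSup (budgetedMin q κ '' stdSimplex ℝ A) = sInf (inverseFeasible D qinv κ) := by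
  classical
  obtain ⟨a₀, hu₀⟩ := exists_mem_inverseFeasible hq (zero_mem_budgetSet hκ)
  have hΔ : (stdSimplex ℝ A).Nonempty := ⟨_, single_mem_stdSimplex ℝ (Classical.arbitrary A)⟩
  obtain ⟨d, hd, hle⟩ := exists_sInf_inverseFeasible_le_budgetedMin hκ hq_convex hq_bdd hqinv hq
  refine le_antisymm (csSup_le (hΔ.image _) ?_) (hle.trans (le_csSup ?_ ⟨d, hd, rfl⟩))
  · rintro _ ⟨d, hd, rfl⟩
    exact le_csInf ⟨_, hu₀⟩ fun u hu => budgetedMin_le hq_bdd hqinv hd hu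
  · exact ⟨_, by rintro _ ⟨d, hd, rfl⟩; exact budgetedMin_le hq_bdd hqinv hd hu₀⟩

end MaxMin

theorem sSup_budgetedMin_constrainedInf_eq {A E : Type*} [Fintype A] [Nonempty A]
    [TopologicalSpace E] [AddCommGroup E] [Module ℝ E] {P : Set E} {f g : A → E → ℝ} {κ : ℝ}
    (hκ : 0 ≤ κ) (hP : IsCompact P) (hPc : Convex ℝ P) (hf : ∀ a, Continuous (f a))
    (hg : ∀ a, Continuous (g a)) (hfc : ∀ a, ConvexOn ℝ P (f a)) (hgc : ∀ a, ConvexOn ℝ P (g a))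
    (hg_nonneg : ∀ a, ∀ p ∈ P, 0 ≤ g a p) (hg_zero : ∀ a, ∃ p ∈ P, g a p ≤ 0) :
    sSup (budgetedMin (fun a => constrainedInf P (f a) (g a)) κ '' stdSimplex ℝ A) =
      sInf (inverseFeasible (fun a => {u | ∃ p ∈ P, f a p ≤ u})
        (fun a => constrainedInf P (g a) (f a)) κ) := by
  have hfeas : ∀ a ξ, 0 ≤ ξ → ∃ p ∈ P, g a p ≤ ξ := fun a ξ hξ =>
    let ⟨p, hp, hp0⟩ := hg_zero a; ⟨p, hp, hp0.trans hξ⟩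
  refine sSup_budgetedMin_eq_sInf_inverseFeasible hκ (fun a => ?_) (fun a => ?_)
    (fun a u hu =>
      ⟨le_constrainedInf hu (hg_nonneg a), constrainedInf_swap_le hP (hg a) (hf a) hu le_rfl⟩)
    (fun a ξ u hξ hu => ?_)
  · exact (convexOn_constrainedInf hP hPc (hf a) (hg a) (hfc a) (hgc a)).subset (hfeas a)
      (convex_Ici 0)
  · obtain ⟨m, hm⟩ := (hP.image (hf a)).bddBelow
    refine ⟨m, ?_⟩
    rintro _ ⟨ξ, hξ, rfl⟩
    exact le_constrainedInf (hfeas a ξ hξ) fun p hp => hm ⟨p, hp, rfl⟩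
  · obtain ⟨p, hp, -, hpu⟩ := exists_le_of_constrainedInf_le hP (hf a) (hg a) (hfeas a ξ hξ) hu
    exact ⟨⟨p, hp, hpu⟩, constrainedInf_swap_le hP (hf a) (hg a) (hfeas a ξ hξ) hu⟩

theorem convexOn_sum_mul_abs_sub {S : Type*} [Fintype S] {w : S → ℝ} (hw : ∀ i, 0 ≤ w i)
    (c : S → ℝ) {P : Set (S → ℝ)} (hP : Convex ℝ P) :
    ConvexOn ℝ P fun p => ∑ i, w i * |p i - c i| := by
  refine ⟨hP, fun p _ p' _ a b ha hb hab => ?_⟩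
  simp only [Pi.add_apply, Pi.smul_apply, smul_eq_mul, Finset.mul_sum, ← Finset.sum_add_distrib]
  refine Finset.sum_le_sum fun i _ => ?_
  have habs : |a * p i + b * p' i - c i| ≤ a * |p i - c i| + b * |p' i - c i| :=
    calc |a * p i + b * p' i - c i| = |a * (p i - c i) + b * (p' i - c i)| := by
          congr 1; linear_combination c i * hab
      _ ≤ |a * (p i - c i)| + |b * (p' i - c i)| := abs_add_le _ _
      _ = a * |p i - c i| + b * |p' i - c i| := by
          rw [abs_mul, abs_mul, abs_of_nonneg ha, abs_of_nonneg hb]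
  calc w i * |a * p i + b * p' i - c i| ≤ w i * (a * |p i - c i| + b * |p' i - c i|) :=
        mul_le_mul_of_nonneg_left habs (hw i)
    _ = a * (w i * |p i - c i|) + b * (w i * |p' i - c i|) := by ring

theorem s_rectangular_maxmin_inverse_equivalence_general
    {S A : Type*} [Fintype S] [Fintype A] [Nonempty A]
    (z : A → S → ℝ) (pbar : A → S → ℝ) (hpbar : ∀ a, pbar a ∈ stdSimplex ℝ S)
    (w : A → S → ℝ) (hw : ∀ a i, 0 < w a i)
    (κ : ℝ) (hκ : 0 ≤ κ)
    (q : A → ℝ → ℝ)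
    (hq : ∀ (a : A) (ξ : ℝ), q a ξ =
      sInf ((fun p : S → ℝ => ∑ i, z a i * p i) ''
        {p | p ∈ stdSimplex ℝ S ∧ ∑ i, w a i * |p i - pbar a i| ≤ ξ}))
    (qinv : A → ℝ → ℝ)
    (hqinv : ∀ (a : A) (u : ℝ), qinv a u =
      sInf ((fun p : S → ℝ => ∑ i, w a i * |p i - pbar a i|) ''
        {p | p ∈ stdSimplex ℝ S ∧ ∑ i, z a i * p i ≤ u})) :
    sSup ((fun d : A → ℝ =>
        sInf ((fun ξ : A → ℝ => ∑ a, d a * q a (ξ a)) ''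
          {ξ | (∀ a, 0 ≤ ξ a) ∧ ∑ a, ξ a ≤ κ})) '' stdSimplex ℝ A)
      = sInf {u : ℝ |
          (∀ a, ∃ p ∈ stdSimplex ℝ S, ∑ i, z a i * p i ≤ u) ∧
          ∑ a, qinv a u ≤ κ} := by
  obtain rfl : q = fun a => constrainedInf (stdSimplex ℝ S) (fun p => ∑ i, z a i * p i)
      (fun p => ∑ i, w a i * |p i - pbar a i|) := funext fun a => funext (hq a)
  obtain rfl : qinv = fun a => constrainedInf (stdSimplex ℝ S)
      (fun p => ∑ i, w a i * |p i - pbar a i|) (fun p => ∑ i, z a i * p i) :=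
    funext fun a => funext (hqinv a)
  exact sSup_budgetedMin_constrainedInf_eq hκ (isCompact_stdSimplex ℝ S) (convex_stdSimplex ℝ S)
    (fun a => by fun_prop) (fun a => by fun_prop)
    (fun a => (dotProductBilin ℝ ℝ (z a)).convexOn (convex_stdSimplex ℝ S))
    (fun a => convexOn_sum_mul_abs_sub (fun i => (hw a i).le) (pbar a) (convex_stdSimplex ℝ S))
    (fun a p _ => Finset.sum_nonneg fun i _ => mul_nonneg (hw a i).le (abs_nonneg _))
    (fun a => ⟨pbar a, hpbar a, by simp⟩)

/-- Equivalence of the s-rectangular max-min problem and its inverse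
formulation: the optimal value of
`max_{d ∈ Δ^A} min{ Σ_a d_a q_a(ξ_a) : ξ ≥ 0, Σ_a ξ_a ≤ κ }` equals the optimal
value of `min{ u : Σ_a q_a⁻¹(u) ≤ κ }` (where `q_a⁻¹(u) = +∞` when the feasible set
is empty, encoded by requiring each feasible set to be nonempty). -/
theorem s_rectangular_maxmin_inverse_equivalence
    {S A : Type*} [Fintype S] [Nonempty S] [Fintype A] [Nonempty A]
    (z : A → S → ℝ) (pbar : A → S → ℝ) (hpbar : ∀ a, pbar a ∈ stdSimplex ℝ S)
    (w : A → S → ℝ) (hw : ∀ a i, 0 < w a i)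
    (κ : ℝ) (hκ : 0 ≤ κ)
    (q : A → ℝ → ℝ)
    (hq : ∀ (a : A) (ξ : ℝ), q a ξ =
      sInf ((fun p : S → ℝ => ∑ i, z a i * p i) ''
        {p | p ∈ stdSimplex ℝ S ∧ ∑ i, w a i * |p i - pbar a i| ≤ ξ}))
    (qinv : A → ℝ → ℝ)
    (hqinv : ∀ (a : A) (u : ℝ), qinv a u =
      sInf ((fun p : S → ℝ => ∑ i, w a i * |p i - pbar a i|) ''
        {p | p ∈ stdSimplex ℝ S ∧ ∑ i, z a i * p i ≤ u})) :
    sSup ((fun d : A → ℝ =>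
        sInf ((fun ξ : A → ℝ => ∑ a, d a * q a (ξ a)) ''
          {ξ | (∀ a, 0 ≤ ξ a) ∧ ∑ a, ξ a ≤ κ})) '' stdSimplex ℝ A)
      = sInf {u : ℝ |
          (∀ a, ∃ p ∈ stdSimplex ℝ S, ∑ i, z a i * p i ≤ u) ∧
          ∑ a, qinv a u ≤ κ} :=
  s_rectangular_maxmin_inverse_equivalence_general z pbar hpbar w hw κ hκ q hq qinv hqinv
end

section
/- Let κ > 0, let u* be the optimal value of min{ u ∈ ℝ : Σ_{a ∈ A} q_a^{-1}(u) ≤ κ }, and define ξ*_a = q_a^{-1}(u*) for each a ∈ A. Then ξ* is optimal in min{ max_{a ∈ A} q_a(ξ_a) : ξ ∈ ℝ^A, ξ ≥ 0, Σ_a ξ_a ≤ κ } (in particular ξ* is feasible and max_a q_a(ξ*_a) = u*). Moreover, the set C(ξ*) = { a ∈ A : q_a(ξ*_a) = u* } is nonempty, q_a(ξ*_a) = u* for all a ∈ C(ξ*), and for every a ∈ A \ C(ξ*) one has ξ*_a = 0 and q_a(ξ*_a) = p̄_a ⋅ z_a ≤ u*. -/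
open Set Topology

/-!
Both `q_a` and `q_a⁻¹` are minima of a continuous function over a compact slice of the simplex,
so they are attained, and they form a Galois connection: for `ξ ≥ 0`, `q_a(ξ) ≤ u` iff `u` is
attainable and `q_a⁻¹(u) ≤ ξ`. Hence `u` is feasible for the outer problem exactly when some
budget allocation `ξ` achieves `max_a q_a(ξ_a) ≤ u`, which gives optimality of `ξ*` and
`max_a q_a(ξ*_a) = u*`. If `q_a(ξ*_a) < u*` with `ξ*_a > 0`, moving the minimiser of `q_a` slightly
towards `p̄_a` keeps its cost below `u*` and strictly shrinks its (convex) distance to `p̄_a`,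
contradicting the minimality of `ξ*_a = q_a⁻¹(u*)`.
-/

section MinOver

variable {E : Type*} {K : Set E} {f g : E → ℝ}

/-- `q_a(ξ) = minOver Δ (z_a ⬝ᵥ ·) ‖· - p̄_a‖_{1,w_a} ξ` and
`q_a⁻¹(u) = minOver Δ ‖· - p̄_a‖_{1,w_a} (z_a ⬝ᵥ ·) u`; on an empty slice the value is the junk
`sInf ∅ = 0` rather than the paper's `+∞`. -/
noncomputable def minOver (K : Set E) (f g : E → ℝ) (c : ℝ) : ℝ :=
  sInf (f '' {p | p ∈ K ∧ g p ≤ c})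

theorem minOver_nonneg (hg : ∀ p, 0 ≤ g p) {c : ℝ} : 0 ≤ minOver K g f c :=
  Real.sInf_nonneg fun _ ⟨p, _, hp⟩ => hp ▸ hg p

theorem minOver_eq_of_forall_le_zero_iff {c : E} (hc : c ∈ K) (hg : ∀ p, g p ≤ 0 ↔ p = c) :
    minOver K f g 0 = f c := by
  have hslice : {p | p ∈ K ∧ g p ≤ 0} = {c} := by
    ext p
    simp only [mem_ofPred_eq, hg, mem_singleton_iff, and_iff_right_iff_imp]
    exact fun h => h ▸ hc
  rw [minOver, hslice, image_singleton, csInf_singleton]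

variable [TopologicalSpace E]

theorem minOver_le (hK : IsCompact K) (hf : Continuous f) {c : ℝ} {p : E} (hp : p ∈ K)
    (hgp : g p ≤ c) : minOver K f g c ≤ f p :=
  csInf_le ((hK.bddBelow_image hf.continuousOn).mono (image_mono fun _ hx => hx.1))
    ⟨p, ⟨hp, hgp⟩, rfl⟩

theorem exists_eq_minOver (hK : IsCompact K) (hf : Continuous f) (hg : Continuous g) {c : ℝ}
    (hne : ∃ p ∈ K, g p ≤ c) : ∃ p ∈ K, g p ≤ c ∧ f p = minOver K f g c := by
  have hslice : IsCompact {p | p ∈ K ∧ g p ≤ c} :=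
    hK.inter_right (isClosed_Iic.preimage hg)
  obtain ⟨p, hp, hmin⟩ := hslice.exists_isMinOn (let ⟨p, hp, hgp⟩ := hne; ⟨p, hp, hgp⟩)
    hf.continuousOn
  have hleast : IsLeast (f '' {p | p ∈ K ∧ g p ≤ c}) (f p) :=
    ⟨⟨p, hp, rfl⟩, fun _ ⟨_, hp', hfp'⟩ => hfp' ▸ hmin hp'⟩
  exact ⟨p, hp.1, hp.2, hleast.csInf_eq.symm⟩

theorem minOver_le_iff (hK : IsCompact K) (hf : Continuous f) (hg : Continuous g) {ξ u : ℝ}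
    (hξ : ∃ p ∈ K, g p ≤ ξ) :
    minOver K f g ξ ≤ u ↔ (∃ p ∈ K, f p ≤ u) ∧ minOver K g f u ≤ ξ := by
  constructor
  · intro hle
    obtain ⟨p, hp, hgp, hfp⟩ := exists_eq_minOver hK hf hg hξ
    exact ⟨⟨p, hp, hfp ▸ hle⟩, (minOver_le hK hg hp (hfp ▸ hle)).trans hgp⟩
  · rintro ⟨hu, hle⟩
    obtain ⟨p, hp, hfp, hgp⟩ := exists_eq_minOver hK hg hf hu
    exact (minOver_le hK hf hp (hgp ▸ hle)).trans hfp

end MinOver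

theorem minOver_lt_of_minOver_lt {E : Type*} [AddCommGroup E] [Module ℝ E] [TopologicalSpace E]
    [ContinuousAdd E] [ContinuousSMul ℝ E] {K : Set E} {f g : E → ℝ} (hK : IsCompact K)
    (hf : Continuous f) (hg : Continuous g) (hgK : ConvexOn ℝ K g) {c : E} (hc : c ∈ K)
    (hgc : g c = 0) {ξ u : ℝ} (hξ : 0 < ξ) (hlt : minOver K f g ξ < u) :
    minOver K g f u < ξ := by
  obtain ⟨p, hp, hgp, hfp⟩ := exists_eq_minOver hK hf hg ⟨c, hc, hgc ▸ hξ.le⟩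
  set γ : ℝ → E := fun s => (1 - s) • c + s • p
  have hγ : Continuous γ := by fun_prop
  have hγ1 : γ 1 = p := by simp [γ]
  have hnear : ∀ᶠ s in 𝓝[<] (1 : ℝ), f (γ s) < u ∧ s ∈ Ioo 0 1 :=
    ((((hf.comp hγ).tendsto 1).eventually (gt_mem_nhds (by rwa [Function.comp, hγ1, hfp])))
      |>.filter_mono nhdsWithin_le_nhds).and (Ioo_mem_nhdsLT one_pos)
  obtain ⟨s, hfs, hs0, hs1⟩ := hnear.exists
  have hgs : g (γ s) ≤ s * g p := by
    simpa [hgc] using hgK.2 hc hp (by linarith) hs0.le (by ring)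
  calc minOver K g f u ≤ g (γ s) :=
        minOver_le hK hg (hgK.1 hc hp (by linarith) hs0.le (by ring)) hfs.le
    _ ≤ s * ξ := hgs.trans (mul_le_mul_of_nonneg_left hgp hs0.le)
    _ < ξ := by nlinarith

section WeightedDist

variable {S : Type*} [Fintype S] {w c : S → ℝ}

def weightedDist (w c p : S → ℝ) : ℝ := ∑ i, w i * |p i - c i|

theorem weightedDist_self : weightedDist w c c = 0 := by
  simp [weightedDist]

theorem weightedDist_nonneg (hw : ∀ i, 0 ≤ w i) (p : S → ℝ) : 0 ≤ weightedDist w c p :=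
  Finset.sum_nonneg fun i _ => mul_nonneg (hw i) (abs_nonneg _)

theorem weightedDist_nonpos_iff (hw : ∀ i, 0 < w i) {p : S → ℝ} :
    weightedDist w c p ≤ 0 ↔ p = c := by
  refine ⟨fun h => funext fun i => ?_, fun h => h ▸ weightedDist_self.le⟩
  have hterm := (Finset.sum_eq_zero_iff_of_nonneg fun j _ => mul_nonneg (hw j).le
    (abs_nonneg (p j - c j))).1 (h.antisymm (weightedDist_nonneg (fun j => (hw j).le) p)) i
    (Finset.mem_univ i)
  simpa [(hw i).ne', sub_eq_zero] using hterm

theorem continuous_weightedDist : Continuous (weightedDist w c) := by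
  unfold weightedDist
  fun_prop

theorem convexOn_weightedDist (hw : ∀ i, 0 ≤ w i) : ConvexOn ℝ univ (weightedDist w c) := by
  refine ⟨convex_univ, fun p _ p' _ a b ha hb hab => ?_⟩
  simp only [weightedDist, smul_eq_mul, Finset.mul_sum, ← Finset.sum_add_distrib]
  refine Finset.sum_le_sum fun i _ => ?_
  have hsplit : (a • p + b • p') i - c i = a * (p i - c i) + b * (p' i - c i) := by
    simp only [Pi.add_apply, Pi.smul_apply, smul_eq_mul]
    linear_combination c i * hab
  calc w i * |(a • p + b • p') i - c i|
      ≤ w i * (a * |p i - c i| + b * |p' i - c i|) := by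
        rw [hsplit]
        refine mul_le_mul_of_nonneg_left ((abs_add_le _ _).trans_eq ?_) (hw i)
        rw [abs_mul, abs_mul, abs_of_nonneg ha, abs_of_nonneg hb]
    _ = a * (w i * |p i - c i|) + b * (w i * |p' i - c i|) := by ring

end WeightedDist

theorem le_iSup_minOver_of_mem_lowerBounds {E ι : Type*} [TopologicalSpace E] [Fintype ι]
    {K : Set E} (hK : IsCompact K) {f g : ι → E → ℝ} (hf : ∀ i, Continuous (f i))
    (hg : ∀ i, Continuous (g i)) {κ ustar : ℝ}
    (hustar : ustar ∈ lowerBounds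
      {u | (∀ i, ∃ p ∈ K, f i p ≤ u) ∧ ∑ i, minOver K (g i) (f i) u ≤ κ})
    {ξ : ι → ℝ} (hξ : ∀ i, ∃ p ∈ K, g i p ≤ ξ i) (hsum : ∑ i, ξ i ≤ κ) :
    ustar ≤ ⨆ i, minOver K (f i) (g i) (ξ i) := by
  have hfeas i := (minOver_le_iff hK (hf i) (hg i) (hξ i)).1
    (le_ciSup (Finite.bddAbove_range fun i => minOver K (f i) (g i) (ξ i)) i)
  exact hustar ⟨fun i => (hfeas i).1,
    (Finset.sum_le_sum fun i _ => (hfeas i).2).trans hsum⟩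

theorem xi_star_optimal_and_structure_general
    {S A : Type*} [Fintype S] [Fintype A] [Nonempty A]
    (z : A → S → ℝ) (pbar : A → S → ℝ) (hpbar : ∀ a, pbar a ∈ stdSimplex ℝ S)
    (w : A → S → ℝ) (hw : ∀ a i, 0 < w a i)
    (κ : ℝ)
    (q : A → ℝ → ℝ)
    (hq : ∀ (a : A) (ξ : ℝ), q a ξ =
      sInf ((fun p : S → ℝ => ∑ i, z a i * p i) ''
        {p | p ∈ stdSimplex ℝ S ∧ ∑ i, w a i * |p i - pbar a i| ≤ ξ}))
    (qinv : A → ℝ → ℝ)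
    (hqinv : ∀ (a : A) (u : ℝ), qinv a u =
      sInf ((fun p : S → ℝ => ∑ i, w a i * |p i - pbar a i|) ''
        {p | p ∈ stdSimplex ℝ S ∧ ∑ i, z a i * p i ≤ u}))
    (ustar : ℝ)
    (hustar : IsLeast {u : ℝ |
        (∀ a, ∃ p ∈ stdSimplex ℝ S, ∑ i, z a i * p i ≤ u) ∧
        ∑ a, qinv a u ≤ κ} ustar)
    (ξstar : A → ℝ) (hξstar : ∀ a, ξstar a = qinv a ustar) :
    ((∀ a, 0 ≤ ξstar a) ∧ ∑ a, ξstar a ≤ κ) ∧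
    (⨆ a, q a (ξstar a)) = ustar ∧
    (∀ ξ : A → ℝ, (∀ a, 0 ≤ ξ a) → ∑ a, ξ a ≤ κ →
      (⨆ a, q a (ξstar a)) ≤ ⨆ a, q a (ξ a)) ∧
    (∃ a, q a (ξstar a) = ustar) ∧
    (∀ a, q a (ξstar a) ≠ ustar →
      ξstar a = 0 ∧ q a (ξstar a) = ∑ i, pbar a i * z a i ∧ q a (ξstar a) ≤ ustar) := by
  set K := stdSimplex ℝ S
  have hK : IsCompact K := isCompact_stdSimplex ℝ S
  have hf a : Continuous (z a ⬝ᵥ ·) := continuous_const.dotProduct continuous_id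
  have hg a : Continuous (weightedDist (w a) (pbar a)) := continuous_weightedDist
  have hq' : ∀ a ξ, q a ξ = minOver K (z a ⬝ᵥ ·) (weightedDist (w a) (pbar a)) ξ := hq
  have hqinv' : ∀ a u, qinv a u = minOver K (weightedDist (w a) (pbar a)) (z a ⬝ᵥ ·) u := hqinv
  have hdom a {ξ : ℝ} (hξ : 0 ≤ ξ) : ∃ p ∈ K, weightedDist (w a) (pbar a) p ≤ ξ :=
    ⟨pbar a, hpbar a, weightedDist_self.trans_le hξ⟩
  have hnonneg a : 0 ≤ ξstar a := by
    rw [hξstar, hqinv']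
    exact minOver_nonneg (weightedDist_nonneg fun i => (hw a i).le)
  have hsum : ∑ a, ξstar a ≤ κ := by simpa only [hξstar] using hustar.1.2
  have hle a : q a (ξstar a) ≤ ustar := by
    rw [hq', minOver_le_iff hK (hf a) (hg a) (hdom a (hnonneg a)), hξstar, ← hqinv']
    exact ⟨hustar.1.1 a, le_rfl⟩
  have hlower {ξ : A → ℝ} (hξ : ∀ a, 0 ≤ ξ a) (hξκ : ∑ a, ξ a ≤ κ) :
      ustar ≤ ⨆ a, q a (ξ a) := by
    simp only [hq']
    exact le_iSup_minOver_of_mem_lowerBounds hK hf hg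
      (fun u hu => hustar.2 ⟨hu.1, by simpa only [hqinv'] using hu.2⟩) (fun a => hdom a (hξ a)) hξκ
  have hsup : (⨆ a, q a (ξstar a)) = ustar := (ciSup_le hle).antisymm (hlower hnonneg hsum)
  refine ⟨⟨hnonneg, hsum⟩, hsup, fun ξ hξ hξκ => hsup ▸ hlower hξ hξκ, ?_, fun a ha => ?_⟩
  · obtain ⟨a, ha⟩ := exists_eq_ciSup_of_finite (f := fun a => q a (ξstar a))
    exact ⟨a, ha.trans hsup⟩
  have hzero : ξstar a = 0 := by
    by_contra hne
    have hlt := minOver_lt_of_minOver_lt hK (hf a) (hg a)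
      ((convexOn_weightedDist fun i => (hw a i).le).subset (subset_univ K) (convex_stdSimplex ℝ S))
      (hpbar a) weightedDist_self ((hnonneg a).lt_of_ne' hne) (hq' a _ ▸ (hle a).lt_of_ne ha)
    exact hlt.ne (by rw [← hqinv', hξstar])
  refine ⟨hzero, ?_, hle a⟩
  rw [hq', hzero,
    minOver_eq_of_forall_le_zero_iff (hpbar a) fun _ => weightedDist_nonpos_iff (hw a),
    dotProduct_comm]
  rfl

/-- With `u*` the optimal value of `min{u : Σ_a q_a⁻¹(u) ≤ κ}` and
`ξ*_a = q_a⁻¹(u*)`, the vector `ξ*` is optimal in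
`min{ max_a q_a(ξ_a) : ξ ≥ 0, Σ_a ξ_a ≤ κ }` (in particular it is feasible and
achieves `max_a q_a(ξ*_a) = u*`); the set `C(ξ*) = {a : q_a(ξ*_a) = u*}` is
nonempty, and every `a ∉ C(ξ*)` satisfies `ξ*_a = 0` and
`q_a(ξ*_a) = p̄_a⋅z_a ≤ u*`. -/
theorem xi_star_optimal_and_structure
    {S A : Type*} [Fintype S] [Nonempty S] [Fintype A] [Nonempty A]
    (z : A → S → ℝ) (pbar : A → S → ℝ) (hpbar : ∀ a, pbar a ∈ stdSimplex ℝ S)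
    (w : A → S → ℝ) (hw : ∀ a i, 0 < w a i)
    (κ : ℝ) (hκ : 0 < κ)
    (q : A → ℝ → ℝ)
    (hq : ∀ (a : A) (ξ : ℝ), q a ξ =
      sInf ((fun p : S → ℝ => ∑ i, z a i * p i) ''
        {p | p ∈ stdSimplex ℝ S ∧ ∑ i, w a i * |p i - pbar a i| ≤ ξ}))
    (qinv : A → ℝ → ℝ)
    (hqinv : ∀ (a : A) (u : ℝ), qinv a u =
      sInf ((fun p : S → ℝ => ∑ i, w a i * |p i - pbar a i|) ''
        {p | p ∈ stdSimplex ℝ S ∧ ∑ i, z a i * p i ≤ u}))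
    (ustar : ℝ)
    (hustar : IsLeast {u : ℝ |
        (∀ a, ∃ p ∈ stdSimplex ℝ S, ∑ i, z a i * p i ≤ u) ∧
        ∑ a, qinv a u ≤ κ} ustar)
    (ξstar : A → ℝ) (hξstar : ∀ a, ξstar a = qinv a ustar) :
    ((∀ a, 0 ≤ ξstar a) ∧ ∑ a, ξstar a ≤ κ) ∧
    (⨆ a, q a (ξstar a)) = ustar ∧
    (∀ ξ : A → ℝ, (∀ a, 0 ≤ ξ a) → ∑ a, ξ a ≤ κ →
      (⨆ a, q a (ξstar a)) ≤ ⨆ a, q a (ξ a)) ∧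
    (∃ a, q a (ξstar a) = ustar) ∧
    (∀ a, q a (ξstar a) ≠ ustar →
      ξstar a = 0 ∧ q a (ξstar a) = ∑ i, pbar a i * z a i ∧ q a (ξstar a) ≤ ustar) :=
  xi_star_optimal_and_structure_general z pbar hpbar w hw κ q hq qinv hqinv ustar hustar ξstar
    hξstar
end

section
/- (Dominated receivers can be excluded.) Let i, j ∈ S with i ≠ j satisfy z_j ≤ z_i and w_j ≤ w_i. Then for every ξ ≥ 0, q(ξ) = min{ z ⋅ p : p ∈ Δ^S, ‖p − p̄‖_{1,w} ≤ ξ, p_i ≤ p̄_i }; that is, adding the constraint p_i ≤ p̄_i does not change the optimal value. In particular, for any feasible p with p_i > p̄_i, the vector p' = p − δ e_i + δ e_j with δ = p_i − p̄_i (e_i, e_j the standard unit vectors) satisfies p' ∈ Δ^S, ‖p' − p̄‖_{1,w} ≤ ‖p − p̄‖_{1,w}, and z ⋅ p' ≤ z ⋅ p. -/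
/-- Dominated receivers can be excluded. If `z_j ≤ z_i` and
`w_j ≤ w_i` with `i ≠ j`, then adding the constraint `p_i ≤ p̄_i` does not change
the value of `q(ξ)`; in particular, for any feasible `p` with `p_i > p̄_i`, moving
the surplus mass `δ = p_i − p̄_i` from component `i` to component `j` yields a
feasible point with no larger weighted-L1 distance and no larger objective. -/
theorem dominated_receivers_excluded
    {S : Type*} [Fintype S] [Nonempty S] [DecidableEq S]
    (z : S → ℝ) (pbar : S → ℝ) (hpbar : pbar ∈ stdSimplex ℝ S)
    (w : S → ℝ) (hw : ∀ k, 0 < w k)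
    (q : ℝ → ℝ)
    (hq : ∀ ξ : ℝ, q ξ =
      sInf ((fun p : S → ℝ => ∑ k, z k * p k) ''
        {p | p ∈ stdSimplex ℝ S ∧ ∑ k, w k * |p k - pbar k| ≤ ξ}))
    (i j : S) (hij : i ≠ j) (hz : z j ≤ z i) (hwij : w j ≤ w i) :
    (∀ ξ : ℝ, 0 ≤ ξ → q ξ =
      sInf ((fun p : S → ℝ => ∑ k, z k * p k) ''
        {p | p ∈ stdSimplex ℝ S ∧ ∑ k, w k * |p k - pbar k| ≤ ξ ∧ p i ≤ pbar i})) ∧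
    (∀ p : S → ℝ, p ∈ stdSimplex ℝ S → pbar i < p i →
      ∀ p' : S → ℝ,
        (p' = fun k =>
          if k = i then p k - (p i - pbar i)
          else if k = j then p k + (p i - pbar i)
          else p k) →
        p' ∈ stdSimplex ℝ S ∧
        ∑ k, w k * |p' k - pbar k| ≤ ∑ k, w k * |p k - pbar k| ∧
        ∑ k, z k * p' k ≤ ∑ k, z k * p k) := by
  classical
  have hsub : ({i, j} : Finset S) ⊆ Finset.univ := Finset.subset_univ _
  have key : ∀ (F : S → ℝ), ∑ k, F k
      = ∑ k ∈ Finset.univ \ {i, j}, F k + (F i + F j) := by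
    intro F
    rw [← Finset.sum_pair hij, Finset.sum_sdiff hsub]
  have main : ∀ p : S → ℝ, p ∈ stdSimplex ℝ S → pbar i < p i →
      ∀ p' : S → ℝ,
        (p' = fun k =>
          if k = i then p k - (p i - pbar i)
          else if k = j then p k + (p i - pbar i)
          else p k) →
        p' ∈ stdSimplex ℝ S ∧
        ∑ k, w k * |p' k - pbar k| ≤ ∑ k, w k * |p k - pbar k| ∧
        ∑ k, z k * p' k ≤ ∑ k, z k * p k := by
    intro p hp hpi p' hp'
    set δ := p i - pbar i with hδ
    have hδpos : 0 < δ := by simp [hδ]; linarith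
    have hp'i : p' i = pbar i := by simp [hp', hδ]
    have hp'j : p' j = p j + δ := by simp [hp', hij.symm, hδ]
    have hp'k : ∀ k, k ≠ i → k ≠ j → p' k = p k := by
      intro k h1 h2; simp [hp', h1, h2]
    have hrest : ∀ (G : S → ℝ → ℝ), ∑ k ∈ Finset.univ \ {i, j}, G k (p' k)
        = ∑ k ∈ Finset.univ \ {i, j}, G k (p k) := by
      intro G
      refine Finset.sum_congr rfl ?_
      intro k hk
      simp only [Finset.mem_sdiff, Finset.mem_insert, Finset.mem_singleton] at hk
      rw [hp'k k (fun h => hk.2 (Or.inl h)) (fun h => hk.2 (Or.inr h))]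
    constructor
    · constructor
      · intro k
        by_cases h1 : k = i
        · subst h1; rw [hp'i]; exact hpbar.1 k
        by_cases h2 : k = j
        · rw [h2, hp'j]; have := hp.1 j; linarith
        · rw [hp'k k h1 h2]; exact hp.1 k
      · have h1 := key (fun k => p' k)
        have h2 := key (fun k => p k)
        have h3 := hrest (fun _ x => x)
        rw [h1, h3, hp'i, hp'j]
        have : ∑ k, p k = 1 := hp.2
        rw [h2] at this
        linarith
    constructor
    · rw [key (fun k => w k * |p' k - pbar k|), key (fun k => w k * |p k - pbar k|),
        hrest (fun k x => w k * |x - pbar k|)]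
      have h1 : w i * |p' i - pbar i| = 0 := by rw [hp'i]; simp
      have h2 : w j * |p' j - pbar j| ≤ w j * |p j - pbar j| + w j * δ := by
        rw [hp'j, ← mul_add]
        have habs : |p j + δ - pbar j| ≤ |p j - pbar j| + δ := by
          have h := abs_add_le (p j - pbar j) δ
          rw [abs_of_pos hδpos] at h
          have : p j + δ - pbar j = (p j - pbar j) + δ := by ring
          rw [this]; exact h
        exact mul_le_mul_of_nonneg_left habs (hw j).le
      have h3 : w i * |p i - pbar i| = w i * δ := by
        rw [hδ, abs_of_pos hδpos]
      have h4 : w j * δ ≤ w i * δ := by nlinarith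
      linarith
    · rw [key (fun k => z k * p' k), key (fun k => z k * p k),
        hrest (fun k x => z k * x)]
      rw [hp'i, hp'j]
      have h5 : z i * p i = z i * pbar i + z i * δ := by rw [hδ]; ring
      have h6 := mul_le_mul_of_nonneg_right hz hδpos.le
      linarith
  refine ⟨?_, main⟩
  intro ξ hξ
  rw [hq ξ]
  set A := ((fun p : S → ℝ => ∑ k, z k * p k) ''
      {p | p ∈ stdSimplex ℝ S ∧ ∑ k, w k * |p k - pbar k| ≤ ξ}) with hA
  set B := ((fun p : S → ℝ => ∑ k, z k * p k) ''
      {p | p ∈ stdSimplex ℝ S ∧ ∑ k, w k * |p k - pbar k| ≤ ξ ∧ p i ≤ pbar i}) with hB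
  have hBA : B ⊆ A := by
    rintro y ⟨p, ⟨h1, h2, _⟩, rfl⟩
    exact ⟨p, ⟨h1, h2⟩, rfl⟩
  have hBne : B.Nonempty := by
    refine ⟨∑ k, z k * pbar k, pbar, ⟨hpbar, ?_, le_refl _⟩, rfl⟩
    simp [hξ]
  have hAbdd : BddBelow A := by
    refine ⟨-∑ k, |z k|, ?_⟩
    rintro y ⟨p, ⟨h1, _⟩, rfl⟩
    rw [← Finset.sum_neg_distrib]
    refine Finset.sum_le_sum ?_
    intro k _
    have hpk0 : 0 ≤ p k := h1.1 k
    have hpk1 : p k ≤ 1 := by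
      have := Finset.single_le_sum (f := p) (fun m _ => h1.1 m) (Finset.mem_univ k)
      rw [h1.2] at this; exact this
    have := neg_abs_le (z k)
    nlinarith [abs_nonneg (z k), neg_abs_le (z k), le_abs_self (z k)]
  have hBbdd : BddBelow B := hAbdd.mono hBA
  apply le_antisymm
  · exact csInf_le_csInf hAbdd hBne hBA
  · refine le_csInf (hBne.mono hBA) ?_
    rintro y ⟨p, ⟨h1, h2⟩, rfl⟩
    by_cases hc : p i ≤ pbar i
    · exact csInf_le hBbdd ⟨p, ⟨h1, h2, hc⟩, rfl⟩
    · push_neg at hc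
      obtain ⟨hs', hl1', hobj'⟩ := main p h1 hc _ rfl
      refine le_trans (csInf_le hBbdd ⟨_, ⟨hs', le_trans hl1' h2, ?_⟩, rfl⟩) hobj'
      simp
end
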